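/- arXiv:math/0603224 — 6 statements merged into one kernel-verified Lean document; each statement's English description precedes it below -/
import Mathlib

section
/- Let Z be a Hölder continuous function on [0,T] with exponent γ ∈ (0,1], and for ε > 0 define Z_ε(t) = (1/ε)∫₀ᵗ (Z(u+ε) − Z(u)) du (with Z extended constantly outside [0,T]). Then for any 0 < γ' < γ, Z_ε converges to Z in the γ'-Hölder norm as ε → 0; more precisely the γ'-Hölder seminorm of Z_ε − Z is bounded by C·N_γ(Z)·ε^{γ−γ'} for a constant C depending only on γ. -/
open MeasureTheory Filter Set

/-- `f` is extended constantly outside `[0,T]`. -/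
def ExtConst (T : ℝ) (f : ℝ → ℝ) : Prop :=
  (∀ t ≤ (0:ℝ), f t = f 0) ∧ ∀ t, T ≤ t → f t = f T

/-- `f` is `γ`-Hölder on `[0,T]` with constant `N`. -/
def HolderC (T γ N : ℝ) (f : ℝ → ℝ) : Prop :=
  ∀ s ∈ Set.Icc (0:ℝ) T, ∀ t ∈ Set.Icc (0:ℝ) T, |f t - f s| ≤ N * |t - s| ^ γ

/-- The smoothing `Z_ε(t) = ε⁻¹ ∫₀ᵗ (Z(u+ε) − Z(u)) du`. -/
noncomputable def smoothed (ε : ℝ) (Z : ℝ → ℝ) (t : ℝ) : ℝ :=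
  (1 / ε) * ∫ u in (0:ℝ)..t, (Z (u + ε) - Z u)

lemma rpow_split {x : ℝ} (hx : 0 < x) (a b c : ℝ) (h : a = b + c) :
    x ^ a = x ^ b * x ^ c := by
  rw [h, Real.rpow_add hx]

/-- The constant extension is globally Hölder with the same constant. -/
lemma globHolder (T γ N : ℝ) (hT : 0 < T) (hγ0 : 0 < γ) {Z : ℝ → ℝ}
    (he : ExtConst T Z) (hH : HolderC T γ N Z) (hN : 0 ≤ N) :
    ∀ s t : ℝ, |Z t - Z s| ≤ N * |t - s| ^ γ := by
  intro s t
  set p : ℝ → ℝ := fun x => max (min x T) 0 with hp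
  have hZp : ∀ x, Z x = Z (p x) := by
    intro x
    rcases le_or_gt x 0 with h | h
    · have hpx : p x = 0 := by
        simp only [hp]
        rw [min_eq_left (h.trans hT.le), max_eq_right h]
      rw [hpx, he.1 x h]
    rcases le_or_gt T x with h2 | h2
    · have hpx : p x = T := by
        simp only [hp]
        rw [min_eq_right h2, max_eq_left hT.le]
      rw [hpx, he.2 x h2]
    · have hpx : p x = x := by
        simp only [hp]
        rw [min_eq_left h2.le, max_eq_left h.le]
      rw [hpx]
  have hpmem : ∀ x, p x ∈ Set.Icc (0:ℝ) T := fun x =>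
    ⟨le_max_right _ _, max_le (min_le_right _ _) hT.le⟩
  have hlip : |p t - p s| ≤ |t - s| := by
    calc |p t - p s| ≤ |min t T - min s T| := abs_max_sub_max_le_abs _ _ _
      _ ≤ max |t - s| |T - T| := abs_min_sub_min_le_max _ _ _ _
      _ = |t - s| := by simp
  calc |Z t - Z s| = |Z (p t) - Z (p s)| := by rw [← hZp, ← hZp]
    _ ≤ N * |p t - p s| ^ γ := hH (p s) (hpmem s) (p t) (hpmem t)
    _ ≤ N * |t - s| ^ γ := by
        apply mul_le_mul_of_nonneg_left _ hN
        exact Real.rpow_le_rpow (abs_nonneg _) hlip hγ0.le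

/-- for Hölder continuous `Z` of exponent `γ`, the `γ'`-Hölder seminorm of
`Z_ε − Z` is bounded by `C · N_γ(Z) · ε^(γ−γ')`, with `C` depending only on `γ`;
in particular `Z_ε → Z` in `C^{γ'}` as `ε → 0`. -/
theorem stmt0 (T γ : ℝ) (hT : 0 < T) (hγ : γ ∈ Set.Ioc (0:ℝ) 1) :
    ∃ C : ℝ, 0 < C ∧
      ∀ Z : ℝ → ℝ, Continuous Z → ExtConst T Z →
        ∀ N : ℝ, HolderC T γ N Z →
          ∀ γ', 0 < γ' → γ' < γ →
            ∀ ε : ℝ, 0 < ε →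
              ∀ s ∈ Set.Icc (0:ℝ) T, ∀ t ∈ Set.Icc (0:ℝ) T,
                |(smoothed ε Z t - Z t) - (smoothed ε Z s - Z s)| ≤
                  C * N * ε ^ (γ - γ') * |t - s| ^ γ' := by
  obtain ⟨hγ0, hγ1⟩ := hγ
  refine ⟨2, two_pos, ?_⟩
  intro Z hZc hext N hH γ' hγ'0 hγ'γ ε hε s hs t ht
  have hN : 0 ≤ N := by
    have h1 := hH 0 ⟨le_refl 0, hT.le⟩ T ⟨hT.le, le_refl T⟩
    have h2 : (0:ℝ) < |T - 0| ^ γ := Real.rpow_pos_of_pos (by rwa [sub_zero, abs_of_pos hT]) γ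
    nlinarith [abs_nonneg (Z T - Z 0)]
  have hg := globHolder T γ N hT hγ0 hext hH hN
  -- trivial case t = s
  rcases eq_or_ne t s with rfl | hts
  · simp [Real.zero_rpow hγ'0.ne',
      mul_nonneg (mul_nonneg (by norm_num : (0:ℝ) ≤ 2) hN)
        (Real.rpow_nonneg hε.le _)]
  have hd : 0 < |t - s| := abs_pos.mpr (sub_ne_zero.mpr hts)
  set d := |t - s| with hdd
  have hεγsplit : ε ^ γ = ε ^ (γ - 1) * ε := by
    rw [rpow_split hε γ (γ-1) 1 (by ring), Real.rpow_one]
  -- integrability facts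
  have hc1 : Continuous fun u => Z (u + ε) := hZc.comp (continuous_id.add continuous_const)
  have hc2 : Continuous fun u => Z (u + ε) - Z u := hc1.sub hZc
  have hZε : ∀ u : ℝ, |Z (u + ε) - Z u| ≤ N * ε ^ γ := by
    intro u
    have := hg u (u + ε)
    simpa [abs_of_pos hε] using this
  -- difference of smoothed
  have hsm : smoothed ε Z t - smoothed ε Z s
      = (1 / ε) * ∫ u in s..t, (Z (u + ε) - Z u) := by
    rw [smoothed, smoothed, ← mul_sub,
      intervalIntegral.integral_interval_sub_left
        (hc2.intervalIntegrable 0 t) (hc2.intervalIntegrable 0 s)]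
  have key : |(smoothed ε Z t - Z t) - (smoothed ε Z s - Z s)| ≤
      2 * N * (ε ^ (γ - γ') * d ^ γ') := by
    rcases le_total d ε with hcase | hcase
    · -- small increment: direct bound
      have hint : |∫ u in s..t, (Z (u + ε) - Z u)| ≤ N * ε ^ γ * d := by
        have := intervalIntegral.norm_integral_le_of_norm_le_const
          (C := N * ε ^ γ) (f := fun u => Z (u + ε) - Z u) (a := s) (b := t)
          (fun x _ => hZε x)
        simpa [hdd, Real.norm_eq_abs] using this
      have h1 : |(smoothed ε Z t - Z t) - (smoothed ε Z s - Z s)|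
          ≤ (1/ε) * (N * ε ^ γ * d) + N * d ^ γ := by
        have heq : (smoothed ε Z t - Z t) - (smoothed ε Z s - Z s)
            = ((1 / ε) * ∫ u in s..t, (Z (u + ε) - Z u)) - (Z t - Z s) := by
          rw [← hsm]; ring
        rw [heq]
        refine (abs_sub _ _).trans (add_le_add ?_ (hg s t))
        rw [abs_mul, abs_of_pos (by positivity : (0:ℝ) < 1/ε)]
        exact mul_le_mul_of_nonneg_left hint (by positivity)
      have h2 : (1/ε) * (N * ε ^ γ * d) = N * (ε ^ (γ - 1) * d) := by
        rw [hεγsplit]; field_simp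
      have t1 : ε ^ (γ - 1) * d ≤ ε ^ (γ - γ') * d ^ γ' := by
        have a1 : ε ^ (γ' - 1) ≤ d ^ (γ' - 1) :=
          Real.rpow_le_rpow_of_nonpos hd hcase (by linarith)
        have a2 : ε ^ (γ' - 1) * d ≤ d ^ γ' := by
          have hdγ : d ^ γ' = d ^ (γ' - 1) * d := by
            rw [rpow_split hd γ' (γ'-1) 1 (by ring), Real.rpow_one]
          calc ε ^ (γ' - 1) * d ≤ d ^ (γ' - 1) * d :=
                mul_le_mul_of_nonneg_right a1 hd.le
            _ = d ^ γ' := hdγ.symm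
        calc ε ^ (γ - 1) * d = ε ^ (γ - γ') * (ε ^ (γ' - 1) * d) := by
              rw [rpow_split hε (γ-1) (γ-γ') (γ'-1) (by ring)]; ring
          _ ≤ ε ^ (γ - γ') * d ^ γ' :=
              mul_le_mul_of_nonneg_left a2 (Real.rpow_nonneg hε.le _)
      have t2 : d ^ γ ≤ ε ^ (γ - γ') * d ^ γ' := by
        rw [rpow_split hd γ (γ-γ') γ' (by ring)]
        exact mul_le_mul_of_nonneg_right
          (Real.rpow_le_rpow hd.le hcase (by linarith)) (Real.rpow_nonneg hd.le _)
      calc |(smoothed ε Z t - Z t) - (smoothed ε Z s - Z s)|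
          ≤ (1/ε) * (N * ε ^ γ * d) + N * d ^ γ := h1
        _ = N * (ε ^ (γ - 1) * d) + N * d ^ γ := by rw [h2]
        _ ≤ N * (ε ^ (γ - γ') * d ^ γ') + N * (ε ^ (γ - γ') * d ^ γ') :=
            add_le_add (mul_le_mul_of_nonneg_left t1 hN) (mul_le_mul_of_nonneg_left t2 hN)
        _ = 2 * N * (ε ^ (γ - γ') * d ^ γ') := by ring
    · -- large increment: use boundary representation
      have hrep : (∫ u in s..t, (Z (u + ε) - Z u))
          = (∫ u in t..t+ε, Z u) - ∫ u in s..s+ε, Z u := by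
        have hintg : ∀ a b : ℝ, (∫ u in a..b, Z u)
            = (∫ u in (0:ℝ)..b, Z u) - ∫ u in (0:ℝ)..a, Z u := by
          intro a b
          rw [intervalIntegral.integral_interval_sub_left
            (hZc.intervalIntegrable 0 b) (hZc.intervalIntegrable 0 a)]
        rw [intervalIntegral.integral_sub (hc1.intervalIntegrable s t)
          (hZc.intervalIntegrable s t),
          intervalIntegral.integral_comp_add_right (fun u => Z u) ε,
          hintg (s+ε) (t+ε), hintg s t, hintg t (t+ε), hintg s (s+ε)]
        ring
      have hb : ∀ r : ℝ, |(1/ε) * (∫ u in r..r+ε, Z u) - Z r| ≤ N * ε ^ γ := by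
        intro r
        have heq : (1/ε) * (∫ u in r..r+ε, Z u) - Z r
            = (1/ε) * ∫ u in r..r+ε, (Z u - Z r) := by
          rw [intervalIntegral.integral_sub (hZc.intervalIntegrable _ _)
            (intervalIntegrable_const), intervalIntegral.integral_const]
          field_simp
          try ring
        rw [heq, abs_mul, abs_of_pos (by positivity : (0:ℝ) < 1/ε)]
        have hbd : ∀ x ∈ Set.uIoc r (r+ε), ‖Z x - Z r‖ ≤ N * ε ^ γ := by
          intro x hx
          rw [Set.uIoc_of_le (by linarith)] at hx
          calc ‖Z x - Z r‖ ≤ N * |x - r| ^ γ := hg r x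
            _ ≤ N * ε ^ γ := by
                apply mul_le_mul_of_nonneg_left _ hN
                apply Real.rpow_le_rpow (abs_nonneg _) _ hγ0.le
                rw [abs_of_pos (by linarith [hx.1] : (0:ℝ) < x - r)]
                linarith [hx.2]
        have hnn := intervalIntegral.norm_integral_le_of_norm_le_const hbd
        rw [Real.norm_eq_abs] at hnn
        calc (1/ε) * |∫ u in r..r+ε, (Z u - Z r)|
            ≤ (1/ε) * (N * ε ^ γ * |r + ε - r|) :=
              mul_le_mul_of_nonneg_left hnn (by positivity)
          _ = N * ε ^ γ := by
              rw [add_sub_cancel_left, abs_of_pos hε]; field_simp; try ring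
      have heq2 : (smoothed ε Z t - Z t) - (smoothed ε Z s - Z s)
          = ((1/ε) * (∫ u in t..t+ε, Z u) - Z t)
            - ((1/ε) * (∫ u in s..s+ε, Z u) - Z s) := by
        have h := hsm
        rw [hrep, mul_sub] at h
        linarith [h]
      calc |(smoothed ε Z t - Z t) - (smoothed ε Z s - Z s)|
          ≤ |(1/ε) * (∫ u in t..t+ε, Z u) - Z t|
            + |(1/ε) * (∫ u in s..s+ε, Z u) - Z s| := by
            rw [heq2]; exact abs_sub _ _
        _ ≤ N * ε ^ γ + N * ε ^ γ := add_le_add (hb t) (hb s)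
        _ = 2 * N * ε ^ γ := by ring
        _ ≤ 2 * N * (ε ^ (γ - γ') * d ^ γ') := by
            apply mul_le_mul_of_nonneg_left _ (by linarith)
            rw [rpow_split hε γ (γ-γ') γ' (by ring)]
            exact mul_le_mul_of_nonneg_left
              (Real.rpow_le_rpow hε.le hcase hγ'0.le) (Real.rpow_nonneg hε.le _)
  refine key.trans (le_of_eq ?_)
  ring
end

section
/- Let X, Y : [0,T] → ℝ be continuous functions. Then for each ε > 0 and t ∈ [0,T], the identity C(ε,X,Y)(t) = I⁺(ε,Y,dX)(t) − I⁻(ε,Y,dX)(t) + R(ε,t) holds with R(ε,t) → 0 uniformly as ε → 0⁺; consequently, if two of the three limits [X,Y]_t, ∫₀ᵗ Y d⁺X, ∫₀ᵗ Y d⁻X exist (uniformly in t), so does the third, and [X,Y]_t = ∫₀ᵗ Y d⁺X − ∫₀ᵗ Y d⁻X. -/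
open MeasureTheory Filter Set

/-- The `ε`-forward integral `I⁻(ε,Y,dX)(t)`. -/
noncomputable def Iminus (ε : ℝ) (Y X : ℝ → ℝ) (t : ℝ) : ℝ :=
  ∫ s in (0:ℝ)..t, Y s * (X (s + ε) - X s) / ε

/-- The `ε`-backward integral `I⁺(ε,Y,dX)(t)`. -/
noncomputable def Iplus (ε : ℝ) (Y X : ℝ → ℝ) (t : ℝ) : ℝ :=
  ∫ s in (0:ℝ)..t, Y s * (X s - X (s - ε)) / ε

/-- The `ε`-covariation `C(ε,X,Y)(t)`. -/
noncomputable def Ccov (ε : ℝ) (X Y : ℝ → ℝ) (t : ℝ) : ℝ :=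
  ∫ s in (0:ℝ)..t, (X (s + ε) - X s) * (Y (s + ε) - Y s) / ε

lemma proj_eq {T : ℝ} (hT : 0 < T) {f : ℝ → ℝ} (hfe : ExtConst T f) (s : ℝ) :
    f s = f (max 0 (min s T)) := by
  rcases le_or_gt s 0 with h | h
  · rw [min_eq_left (h.trans hT.le), max_eq_left h, hfe.1 s h]
  · rcases le_or_gt s T with h2 | h2
    · rw [min_eq_left h2, max_eq_right h.le]
    · rw [min_eq_right h2.le, max_eq_right hT.le, hfe.2 s h2.le]

lemma extConst_bdd {T : ℝ} (hT : 0 < T) {f : ℝ → ℝ} (hf : Continuous f)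
    (hfe : ExtConst T f) : ∃ M : ℝ, 0 ≤ M ∧ ∀ s, |f s| ≤ M := by
  obtain ⟨x, hx, hmax⟩ := isCompact_Icc.exists_isMaxOn (Set.nonempty_Icc.2 hT.le)
    (hf.abs.continuousOn (s := Set.Icc 0 T))
  refine ⟨|f x|, abs_nonneg _, fun s => ?_⟩
  rw [proj_eq hT hfe s]
  exact hmax ⟨le_max_left _ _, max_le hT.le (min_le_right _ _)⟩

lemma extConst_unifCont {T : ℝ} (hT : 0 < T) {f : ℝ → ℝ} (hf : Continuous f)
    (hfe : ExtConst T f) : UniformContinuous f := by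
  have hucOn : UniformContinuousOn f (Set.Icc 0 T) :=
    isCompact_Icc.uniformContinuousOn_of_continuous (hf.continuousOn)
  rw [Metric.uniformContinuous_iff]
  intro δ hδ
  obtain ⟨η, hη, H⟩ := (Metric.uniformContinuousOn_iff).1 hucOn δ hδ
  refine ⟨η, hη, fun {a b} hab => ?_⟩
  have hmem : ∀ s : ℝ, max 0 (min s T) ∈ Set.Icc 0 T :=
    fun s => ⟨le_max_left _ _, max_le hT.le (min_le_right _ _)⟩
  have hlip : ∀ a b : ℝ, dist (max 0 (min a T)) (max 0 (min b T)) ≤ dist a b := by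
    intro a b
    simp only [Real.dist_eq]
    rw [max_comm 0 (min a T), max_comm 0 (min b T)]
    calc |max (min a T) 0 - max (min b T) 0| ≤ |min a T - min b T| :=
          abs_max_sub_max_le_abs _ _ _
      _ ≤ max |a - b| |T - T| := abs_min_sub_min_le_max _ _ _ _
      _ = |a - b| := by simp
  rw [proj_eq hT hfe a, proj_eq hT hfe b]
  exact H _ (hmem a) _ (hmem b) (lt_of_le_of_lt (hlip a b) hab)

lemma key_identity (ε : ℝ) (X Y : ℝ → ℝ) (hX : Continuous X) (hY : Continuous Y) (t : ℝ) :
    Ccov ε X Y t - (Iplus ε Y X t - Iminus ε Y X t)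
      = (∫ s in (t-ε)..t, Y (s+ε) * (X (s+ε) - X s) / ε)
        - ∫ s in (-ε)..(0:ℝ), Y (s+ε) * (X (s+ε) - X s) / ε := by
  set g : ℝ → ℝ := fun s => Y (s+ε) * (X (s+ε) - X s) / ε with hg_def
  have hg : Continuous g := by
    apply Continuous.div_const
    exact (hY.comp (continuous_id.add continuous_const)).mul
      ((hX.comp (continuous_id.add continuous_const)).sub hX)
  have hint : ∀ a b : ℝ, IntervalIntegrable g volume a b :=
    fun a b => hg.intervalIntegrable a b
  have h1 : Ccov ε X Y t + Iminus ε Y X t = ∫ s in (0:ℝ)..t, g s := by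
    rw [Ccov, Iminus, ← intervalIntegral.integral_add
      (Continuous.intervalIntegrable (by
        apply Continuous.div_const
        exact ((hX.comp (continuous_id.add continuous_const)).sub hX).mul
          ((hY.comp (continuous_id.add continuous_const)).sub hY)) _ _)
      (Continuous.intervalIntegrable (by
        apply Continuous.div_const
        exact hY.mul ((hX.comp (continuous_id.add continuous_const)).sub hX)) _ _)]
    apply intervalIntegral.integral_congr
    intro s _
    simp only [hg_def]
    ring
  have h2 : Iplus ε Y X t = ∫ s in (-ε)..(t-ε), g s := by
    rw [Iplus]
    have hcg : ∀ s : ℝ, Y s * (X s - X (s - ε)) / ε = g (s - ε) := by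
      intro s; simp only [hg_def, sub_add_cancel]
    rw [intervalIntegral.integral_congr (g := fun s => g (s - ε))
      (fun s _ => hcg s)]
    rw [intervalIntegral.integral_comp_sub_right g ε]
    norm_num
  have A := intervalIntegral.integral_add_adjacent_intervals (hint (-ε) 0) (hint 0 t)
  have B := intervalIntegral.integral_add_adjacent_intervals (hint (-ε) (t-ε)) (hint (t-ε) t)
  have : Ccov ε X Y t - (Iplus ε Y X t - Iminus ε Y X t)
      = (∫ s in (0:ℝ)..t, g s) - ∫ s in (-ε)..(t-ε), g s := by
    rw [← h2]; linarith [h1]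
  rw [this]; linarith [A, B]

lemma remainder_tendsto (T : ℝ) (hT : 0 < T) (X Y : ℝ → ℝ)
    (hX : Continuous X) (hY : Continuous Y)
    (hXe : ExtConst T X) (hYe : ExtConst T Y) :
    TendstoUniformlyOn
      (fun ε t => Ccov ε X Y t - (Iplus ε Y X t - Iminus ε Y X t)) 0
      (nhdsWithin 0 (Set.Ioi 0)) (Set.Icc 0 T) := by
  obtain ⟨M, hM0, hM⟩ := extConst_bdd hT hY hYe
  have hXu := extConst_unifCont hT hX hXe
  rw [Metric.tendstoUniformlyOn_iff]
  intro δ hδ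
  set δ' : ℝ := δ / (2 * (M + 1)) with hδ'_def
  have hδ' : 0 < δ' := by positivity
  obtain ⟨η, hη, Hmod⟩ := Metric.uniformContinuous_iff.1 hXu δ' hδ'
  have hmem : Set.Ioo (0:ℝ) η ∈ nhdsWithin (0:ℝ) (Set.Ioi 0) :=
    Ioo_mem_nhdsGT_of_mem ⟨le_refl 0, hη⟩
  filter_upwards [hmem] with ε hε t _
  obtain ⟨hε0, hεη⟩ := hε
  rw [key_identity ε X Y hX hY t]
  have hbound : ∀ s : ℝ, ‖Y (s+ε) * (X (s+ε) - X s) / ε‖ ≤ M * δ' / ε := by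
    intro s
    rw [Real.norm_eq_abs, abs_div, abs_of_pos hε0, abs_mul]
    have h1 : |X (s+ε) - X s| ≤ δ' := by
      have : dist (s + ε) s < η := by
        rw [Real.dist_eq]; simpa [abs_of_pos hε0] using hεη
      have := Hmod this
      rw [Real.dist_eq] at this
      exact this.le
    gcongr
    exact hM _
  have e1 : ‖∫ s in (t-ε)..t, Y (s+ε) * (X (s+ε) - X s) / ε‖ ≤ (M * δ' / ε) * |t - (t-ε)| :=
    intervalIntegral.norm_integral_le_of_norm_le_const (fun x _ => hbound x)
  have e2 : ‖∫ s in (-ε)..(0:ℝ), Y (s+ε) * (X (s+ε) - X s) / ε‖ ≤ (M * δ' / ε) * |0 - (-ε)| :=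
    intervalIntegral.norm_integral_le_of_norm_le_const (fun x _ => hbound x)
  have habs : |t - (t-ε)| = ε := by rw [abs_of_pos (by linarith)]; ring_nf
  have habs2 : |(0:ℝ) - (-ε)| = ε := by rw [abs_of_pos (by linarith)]; ring_nf
  rw [habs] at e1; rw [habs2] at e2
  have hME : M * δ' / ε * ε = M * δ' := by field_simp
  rw [hME] at e1 e2
  have hMδ : 2 * (M * δ') < δ := by
    have h1 : M / (M + 1) < 1 := by
      rw [div_lt_one (by linarith)]; linarith
    calc 2 * (M * δ') = δ * (M / (M + 1)) := by
          rw [hδ'_def]; field_simp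
      _ < δ * 1 := mul_lt_mul_of_pos_left h1 hδ
      _ = δ := mul_one δ
  simp only [Pi.zero_apply, dist_zero_left, Real.norm_eq_abs]
  calc |(∫ s in (t-ε)..t, Y (s+ε) * (X (s+ε) - X s) / ε)
        - ∫ s in (-ε)..(0:ℝ), Y (s+ε) * (X (s+ε) - X s) / ε|
      ≤ ‖∫ s in (t-ε)..t, Y (s+ε) * (X (s+ε) - X s) / ε‖
        + ‖∫ s in (-ε)..(0:ℝ), Y (s+ε) * (X (s+ε) - X s) / ε‖ := abs_sub _ _
    _ ≤ M * δ' + M * δ' := add_le_add e1 e2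
    _ < δ := by linarith

/-- `C(ε,X,Y)(t) = I⁺(ε,Y,dX)(t) − I⁻(ε,Y,dX)(t) + R(ε,t)` with
`R(ε,·) → 0` uniformly on `[0,T]`; consequently if two of the three limits
(covariation, backward, forward) exist uniformly, so does the third, and
`[X,Y] = ∫ Y d⁺X − ∫ Y d⁻X`. -/
theorem stmt3 (T : ℝ) (hT : 0 < T) (X Y : ℝ → ℝ)
    (hX : Continuous X) (hY : Continuous Y)
    (hXe : ExtConst T X) (hYe : ExtConst T Y) :
    TendstoUniformlyOn
      (fun ε t => Ccov ε X Y t - (Iplus ε Y X t - Iminus ε Y X t)) 0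
      (nhdsWithin 0 (Set.Ioi 0)) (Set.Icc 0 T) ∧
    (∀ Fp Fm : ℝ → ℝ,
      TendstoUniformlyOn (fun ε t => Iplus ε Y X t) Fp (nhdsWithin 0 (Set.Ioi 0)) (Set.Icc 0 T) →
      TendstoUniformlyOn (fun ε t => Iminus ε Y X t) Fm (nhdsWithin 0 (Set.Ioi 0)) (Set.Icc 0 T) →
      TendstoUniformlyOn (fun ε t => Ccov ε X Y t) (fun t => Fp t - Fm t)
        (nhdsWithin 0 (Set.Ioi 0)) (Set.Icc 0 T)) ∧
    (∀ B Fm : ℝ → ℝ,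
      TendstoUniformlyOn (fun ε t => Ccov ε X Y t) B (nhdsWithin 0 (Set.Ioi 0)) (Set.Icc 0 T) →
      TendstoUniformlyOn (fun ε t => Iminus ε Y X t) Fm (nhdsWithin 0 (Set.Ioi 0)) (Set.Icc 0 T) →
      TendstoUniformlyOn (fun ε t => Iplus ε Y X t) (fun t => B t + Fm t)
        (nhdsWithin 0 (Set.Ioi 0)) (Set.Icc 0 T)) ∧
    (∀ B Fp : ℝ → ℝ,
      TendstoUniformlyOn (fun ε t => Ccov ε X Y t) B (nhdsWithin 0 (Set.Ioi 0)) (Set.Icc 0 T) →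
      TendstoUniformlyOn (fun ε t => Iplus ε Y X t) Fp (nhdsWithin 0 (Set.Ioi 0)) (Set.Icc 0 T) →
      TendstoUniformlyOn (fun ε t => Iminus ε Y X t) (fun t => Fp t - B t)
        (nhdsWithin 0 (Set.Ioi 0)) (Set.Icc 0 T)) := by
  have hR := remainder_tendsto T hT X Y hX hY hXe hYe
  refine ⟨hR, ?_, ?_, ?_⟩
  · intro Fp Fm hp hm
    refine ((hR.add (hp.sub hm)).congr ?_).congr_right ?_
    · filter_upwards with ε t _
      simp only [Pi.add_apply, Pi.sub_apply]
      ring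
    · intro t _
      simp
  · intro B Fm hB hm
    refine (((hB.sub hR).add hm).congr ?_).congr_right ?_
    · filter_upwards with ε t _
      simp only [Pi.add_apply, Pi.sub_apply]
      ring
    · intro t _
      simp
  · intro B Fp hB hp
    refine (((hp.sub hB).add hR).congr ?_).congr_right ?_
    · filter_upwards with ε t _
      simp only [Pi.add_apply, Pi.sub_apply]
      ring
    · intro t _
      simp
end

section
/- If X : [0,T] → ℝ is a finite quadratic variation function and Y : [0,T] → ℝ is continuous with zero quadratic variation (i.e. [Y,Y]_t = 0 for all t), then the covariation [X,Y] exists and equals zero. -/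
open MeasureTheory Filter Set

/-!
Pointwise, `2|ab| ≤ δ a² + b²/δ` for every `δ > 0`; integrating the increments gives
`2|C(ε,X,Y)| ≤ δ C(ε,X,X) + C(ε,Y,Y)/δ`. Since `C(ε,X,X)` is nondecreasing in `t`, on `[0,T]`
it is bounded by `C(ε,X,X)(T)`, which converges, so the first term is small uniformly once `δ`
is small; for that fixed `δ`, the second term tends to `0` uniformly.
-/

lemma two_mul_abs_mul_le {δ : ℝ} (hδ : 0 < δ) (a b : ℝ) :
    2 * |a * b| ≤ δ * (a * a) + b * b / δ := by
  have h := two_mul_le_add_sq |δ * a| |b|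
  rw [sq_abs, sq_abs, abs_mul, abs_of_pos hδ] at h
  rw [show δ * (a * a) + b * b / δ = ((δ * a) ^ 2 + b ^ 2) / δ by field_simp, le_div_iff₀ hδ,
    abs_mul]
  linarith

lemma two_mul_abs_intervalIntegral_mul_le {f g : ℝ → ℝ} (hf : Continuous f) (hg : Continuous g)
    {a b δ : ℝ} (hab : a ≤ b) (hδ : 0 < δ) :
    2 * |∫ s in a..b, f s * g s| ≤
      δ * (∫ s in a..b, f s * f s) + (∫ s in a..b, g s * g s) / δ := by
  calc 2 * |∫ s in a..b, f s * g s|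
      ≤ ∫ s in a..b, 2 * |f s * g s| := by
        rw [intervalIntegral.integral_const_mul]
        gcongr
        exact intervalIntegral.abs_integral_le_integral_abs hab
    _ ≤ ∫ s in a..b, (δ * (f s * f s) + g s * g s / δ) := by
        apply intervalIntegral.integral_mono_on hab
        · exact Continuous.intervalIntegrable (by fun_prop) a b
        · exact Continuous.intervalIntegrable (by fun_prop) a b
        · exact fun s _ => two_mul_abs_mul_le hδ (f s) (g s)
    _ = δ * (∫ s in a..b, f s * f s) + (∫ s in a..b, g s * g s) / δ := by
        rw [intervalIntegral.integral_add, intervalIntegral.integral_const_mul,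
          intervalIntegral.integral_div]
        · exact ((hf.mul hf).const_mul δ).intervalIntegrable a b
        · exact ((hg.mul hg).div_const δ).intervalIntegrable a b

lemma Ccov_eq_integral_div (ε : ℝ) (X Y : ℝ → ℝ) (t : ℝ) :
    Ccov ε X Y t = (∫ s in (0:ℝ)..t, (X (s + ε) - X s) * (Y (s + ε) - Y s)) / ε :=
  intervalIntegral.integral_div ε _

lemma two_mul_abs_Ccov_le {ε δ t : ℝ} (hε : 0 ≤ ε) (hδ : 0 < δ) (ht : 0 ≤ t) {X Y : ℝ → ℝ}
    (hX : Continuous X) (hY : Continuous Y) :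
    2 * |Ccov ε X Y t| ≤ δ * Ccov ε X X t + Ccov ε Y Y t / δ := by
  have h := two_mul_abs_intervalIntegral_mul_le (f := fun s => X (s + ε) - X s)
    (g := fun s => Y (s + ε) - Y s) (by fun_prop) (by fun_prop) ht hδ
  simp only [Ccov_eq_integral_div, abs_div, abs_of_nonneg hε]
  linear_combination div_le_div_of_nonneg_right h hε

lemma Ccov_self_monotoneOn {ε : ℝ} (hε : 0 ≤ ε) {X : ℝ → ℝ} (hX : Continuous X) :
    MonotoneOn (Ccov ε X X) (Ici 0) := by
  intro s hs t _ hst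
  refine intervalIntegral.integral_mono_interval le_rfl hs hst
    (Eventually.of_forall fun u => div_nonneg (mul_self_nonneg _) hε)
    (Continuous.intervalIntegrable (by fun_prop) 0 t)

lemma tendstoUniformlyOn_zero_of_two_mul_abs_le {ι α : Type*} {l : Filter ι} {s : Set α}
    {F G H : ι → α → ℝ} {M : ℝ} (hG : ∀ᶠ i in l, ∀ t ∈ s, G i t ≤ M)
    (hH : TendstoUniformlyOn H 0 l s)
    (hF : ∀ δ > 0, ∀ᶠ i in l, ∀ t ∈ s, 2 * |F i t| ≤ δ * G i t + H i t / δ) :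
    TendstoUniformlyOn F 0 l s := by
  rw [Metric.tendstoUniformlyOn_iff] at hH ⊢
  intro η hη
  set δ := η / (|M| + 1)
  have hδ : 0 < δ := by positivity
  have hδM : δ * M < η := by
    calc δ * M ≤ δ * |M| := by gcongr; exact le_abs_self M
      _ < δ * (|M| + 1) := by gcongr; linarith
      _ = η := div_mul_cancel₀ η (by positivity)
  filter_upwards [hG, hH (δ * η) (by positivity), hF δ hδ] with i hGi hHi hFi t ht
  have hHt : H i t / δ < η := by
    have h := hHi t ht
    rw [Pi.zero_apply, dist_zero_left, Real.norm_eq_abs] at h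
    rw [div_lt_iff₀ hδ]
    linarith [le_abs_self (H i t)]
  have hGt : δ * G i t ≤ δ * M := by gcongr; exact hGi t ht
  rw [Pi.zero_apply, dist_zero_left, Real.norm_eq_abs]
  linarith [hFi t ht]

theorem stmt6_general (T : ℝ) (hT : 0 < T) (X Y : ℝ → ℝ)
    (hX : Continuous X) (hY : Continuous Y)
    (QX : ℝ → ℝ)
    (hQX : TendstoUniformlyOn (fun ε t => Ccov ε X X t) QX
      (nhdsWithin 0 (Set.Ioi 0)) (Set.Icc 0 T))
    (hQY : TendstoUniformlyOn (fun ε t => Ccov ε Y Y t) 0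
      (nhdsWithin 0 (Set.Ioi 0)) (Set.Icc 0 T)) :
    TendstoUniformlyOn (fun ε t => Ccov ε X Y t) 0
      (nhdsWithin 0 (Set.Ioi 0)) (Set.Icc 0 T) := by
  have hpos : ∀ᶠ ε in nhdsWithin (0:ℝ) (Ioi 0), 0 ≤ ε :=
    eventually_mem_nhdsWithin.mono fun ε hε => le_of_lt hε
  have hT_mem : T ∈ Icc 0 T := right_mem_Icc.mpr hT.le
  have hXX_bdd : ∀ᶠ ε in nhdsWithin (0:ℝ) (Ioi 0), ∀ t ∈ Icc 0 T, Ccov ε X X t ≤ QX T + 1 := by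
    filter_upwards [hpos, (hQX.tendsto_at hT_mem).eventually (Metric.ball_mem_nhds _ one_pos)]
      with ε hε hεT t ht
    calc Ccov ε X X t ≤ Ccov ε X X T :=
          Ccov_self_monotoneOn hε hX ht.1 hT_mem.1 ht.2
      _ ≤ QX T + 1 := by
          rw [Real.dist_eq, abs_sub_lt_iff] at hεT
          linarith [hεT.1]
  refine tendstoUniformlyOn_zero_of_two_mul_abs_le hXX_bdd hQY fun δ hδ => ?_
  filter_upwards [hpos] with ε hε t ht
  exact two_mul_abs_Ccov_le hε hδ ht.1 hX hY

/-- if `X` has finite quadratic variation and `Y` has zero quadratic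
variation, then the covariation `[X,Y]` exists and is zero. -/
theorem stmt6 (T : ℝ) (hT : 0 < T) (X Y : ℝ → ℝ)
    (hX : Continuous X) (hY : Continuous Y)
    (hXe : ExtConst T X) (hYe : ExtConst T Y)
    (QX : ℝ → ℝ)
    (hQX : TendstoUniformlyOn (fun ε t => Ccov ε X X t) QX
      (nhdsWithin 0 (Set.Ioi 0)) (Set.Icc 0 T))
    (hQY : TendstoUniformlyOn (fun ε t => Ccov ε Y Y t) 0
      (nhdsWithin 0 (Set.Ioi 0)) (Set.Icc 0 T)) :
    TendstoUniformlyOn (fun ε t => Ccov ε X Y t) 0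
      (nhdsWithin 0 (Set.Ioi 0)) (Set.Icc 0 T) :=
  stmt6_general T hT X Y hX hY QX hQX hQY
end

section
/- Let X : [0,T] → ℝ be continuous of bounded variation and let Y : [0,T] → ℝ be bounded with at most countably many discontinuities. Then ∫₀ᵗ Y d⁻X exists for every t and equals the Lebesgue–Stieltjes integral ∫₀ᵗ Y dX. -/
/-! For a Stieltjes function `F` with measure `μ`, Fubini turns
`∫ g(s) (F(s + ε) - F(s)) ds = ∫ g(s) μ(s, s + ε] ds` into `∫ (∫_{u-ε}^{u} g) dμ(u)`.
The left averages `ε⁻¹ ∫_{u-ε}^{u} g` stay bounded and tend to `g u` wherever `g` is continuous;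
for `g = 1_{(0,t]} Y` this fails only on a countable set, which is `μ`-null when `F` is
continuous. Dominated convergence gives the limit, and linearity handles `X = F - G`. -/

open MeasureTheory Filter Set

open Topology

theorem integrable_of_norm_le_on_of_eq_zero_off {α E : Type*} [MeasurableSpace α]
    [NormedAddCommGroup E] {μ : Measure α} {f : α → E} {s : Set α} (hs : MeasurableSet s)
    (hμs : μ s ≠ ⊤) (hf : AEStronglyMeasurable f μ) {M : ℝ} (hM : ∀ x ∈ s, ‖f x‖ ≤ M)
    (h0 : ∀ x ∉ s, f x = 0) : Integrable f μ :=
  (Measure.integrableOn_of_bounded hμs hf (ae_restrict_of_forall_mem hs hM))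
    |>.integrable_of_forall_notMem_eq_zero h0

theorem ContinuousAt.indicator_Ioc {α E : Type*} [TopologicalSpace α] [LinearOrder α]
    [OrderTopology α] [TopologicalSpace E] [Zero E] {Y : α → E} {a b u : α} (hY : ContinuousAt Y u)
    (ha : u ≠ a) (hb : u ≠ b) : ContinuousAt ((Ioc a b).indicator Y) u := by
  rcases ha.lt_or_gt with hua | hau
  · refine (continuousAt_const : ContinuousAt (fun _ => (0 : E)) u).congr ?_
    filter_upwards [Iio_mem_nhds hua] with s hs
    exact (indicator_of_notMem (fun h => h.1.not_gt hs) _).symm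
  rcases hb.lt_or_gt with hub | hbu
  · refine hY.congr ?_
    filter_upwards [Ioo_mem_nhds hau hub] with s hs
    exact (indicator_of_mem (Ioo_subset_Ioc_self hs) _).symm
  · refine (continuousAt_const : ContinuousAt (fun _ => (0 : E)) u).congr ?_
    filter_upwards [Ioi_mem_nhds hbu] with s hs
    exact (indicator_of_notMem (fun h => h.2.not_gt hs) _).symm

theorem ContinuousAt.tendsto_intervalIntegral_left_div {g : ℝ → ℝ} {u : ℝ}
    (hg : AEStronglyMeasurable g) (hgu : ContinuousAt g u) :
    Tendsto (fun ε => (∫ s in u - ε..u, g s) / ε) (𝓝[>] 0) (𝓝 (g u)) := by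
  have hderiv : HasDerivAt (fun v => ∫ s in u..v, g s) (g u) u :=
    intervalIntegral.integral_hasDerivAt_right IntervalIntegrable.refl
      hg.stronglyMeasurableAtFilter hgu
  have hneg : Tendsto (fun ε : ℝ => -ε) (𝓝[>] 0) (𝓝[<] 0) := by
    simpa using tendsto_neg_nhdsGT_neg (a := (0 : ℝ))
  refine (hderiv.tendsto_slope_zero_left.comp hneg).congr fun ε => ?_
  simp [intervalIntegral.integral_symm u, ← sub_eq_add_neg, div_eq_inv_mul]

theorem abs_intervalIntegral_left_div_le {g : ℝ → ℝ} {M a b : ℝ} (hgM : ∀ s, |g s| ≤ M)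
    (hg0 : ∀ s ∉ Ioc a b, g s = 0) {ε : ℝ} (hε : ε ∈ Ioo 0 1) (u : ℝ) :
    |(∫ s in u - ε..u, g s) / ε| ≤ (Ioc a (b + 1)).indicator (fun _ => M) u := by
  by_cases hu : u ∈ Ioc a (b + 1)
  · rw [indicator_of_mem hu, abs_div, abs_of_pos hε.1, div_le_iff₀ hε.1]
    simpa [abs_of_pos hε.1] using
      intervalIntegral.norm_integral_le_of_norm_le_const (a := u - ε) (b := u) (C := M)
        fun s _ => (Real.norm_eq_abs (g s)).trans_le (hgM s)
  · have hzero : ∫ s in u - ε..u, g s = 0 := by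
      rw [intervalIntegral.integral_of_le (by linarith [hε.1])]
      refine setIntegral_eq_zero_of_forall_eq_zero fun s hs => hg0 s fun hs' => hu ?_
      exact ⟨hs'.1.trans_le hs.2, by linarith [hs.1, hs'.2, hε.2]⟩
    simp [hzero, indicator_of_notMem hu]

namespace StieltjesFunction

variable (F : StieltjesFunction ℝ)

theorem nullSingletonClass_of_continuous (hF : Continuous F) : NullSingletonClass F.measure :=
  ⟨fun a => by
    rw [F.measure_singleton, hF.continuousWithinAt.leftLim_eq, sub_self, ENNReal.ofReal_zero]⟩

variable {g : ℝ → ℝ} {M a b : ℝ}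

theorem integrable_mul_sub (hgm : Measurable g) (hgM : ∀ s, |g s| ≤ M)
    (hg0 : ∀ s ∉ Ioc a b, g s = 0) {ε : ℝ} (hε : 0 ≤ ε) :
    Integrable fun s => g s * (F (s + ε) - F s) := by
  refine integrable_of_norm_le_on_of_eq_zero_off (s := Ioc a b) (M := M * (F (b + ε) - F a))
    measurableSet_Ioc measure_Ioc_lt_top.ne
    (hgm.mul ((F.mono.measurable.comp (measurable_add_const ε)).sub
      F.mono.measurable)).aestronglyMeasurable (fun s hs => ?_) (fun s hs => by simp [hg0 s hs])
  have hinc : 0 ≤ F (s + ε) - F s := sub_nonneg.2 (F.mono (by linarith))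
  rw [Real.norm_eq_abs, abs_mul, abs_of_nonneg hinc]
  exact mul_le_mul (hgM s) (sub_le_sub (F.mono (by linarith [hs.2])) (F.mono hs.1.le)) hinc
    ((abs_nonneg _).trans (hgM s))

/-- Fubini on `{(s, u) | s < u ≤ s + ε}`, using `u ∈ (s, s + ε] ↔ s ∈ [u - ε, u)`. -/
theorem integral_mul_sub_eq_integral_intervalIntegral (hgm : Measurable g)
    (hgM : ∀ s, |g s| ≤ M) (hg0 : ∀ s ∉ Ioc a b, g s = 0) {ε : ℝ} (hε : 0 ≤ ε) :
    ∫ s, g s * (F (s + ε) - F s) = ∫ u, (∫ s in u - ε..u, g s) ∂F.measure := by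
  set S : Set (ℝ × ℝ) := {p | p.1 < p.2 ∧ p.2 ≤ p.1 + ε}
  have hS : MeasurableSet S := (measurableSet_lt measurable_fst measurable_snd).inter
    (measurableSet_le measurable_snd (measurable_fst.add_const ε))
  have hH : Integrable (fun p : ℝ × ℝ => g p.1 * S.indicator 1 p) (volume.prod F.measure) := by
    refine integrable_of_norm_le_on_of_eq_zero_off (s := Ioc a b ×ˢ Ioc a (b + ε)) (M := M)
      (measurableSet_Ioc.prod measurableSet_Ioc) ?_
      ((hgm.comp measurable_fst).mul (measurable_const.indicator hS)).aestronglyMeasurable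
      (fun p _ => ?_) (fun p hp => ?_)
    · rw [Measure.prod_prod]
      exact ENNReal.mul_ne_top measure_Ioc_lt_top.ne (measure_Ioc_lt_top (b := b + ε)).ne
    · by_cases hp : p ∈ S <;> simp [hp, hgM, (abs_nonneg _).trans (hgM 0)]
    · by_cases hp1 : p.1 ∈ Ioc a b
      · have hpS : p ∉ S := fun h => hp ⟨hp1, hp1.1.trans h.1, h.2.trans (by linarith [hp1.2])⟩
        simp [hpS]
      · simp [hg0 _ hp1]
  calc ∫ s, g s * (F (s + ε) - F s)
      = ∫ s, ∫ u, g s * S.indicator 1 (s, u) ∂F.measure := by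
        congr 1 with s
        have hSs : (fun u => S.indicator (1 : ℝ × ℝ → ℝ) (s, u)) =
            (Ioc s (s + ε)).indicator 1 := by
          ext u; simp [S, indicator_apply]
        rw [integral_const_mul, hSs, integral_indicator_one measurableSet_Ioc, measureReal_def,
          F.measure_Ioc, ENNReal.toReal_ofReal (sub_nonneg.2 (F.mono (by linarith)))]
    _ = ∫ u, ∫ s, g s * S.indicator 1 (s, u) ∂volume ∂F.measure := integral_integral_swap hH
    _ = ∫ u, (∫ s in u - ε..u, g s) ∂F.measure := by
        congr 1 with u
        have hSu : (fun s => g s * S.indicator 1 (s, u)) = (Ico (u - ε) u).indicator g := by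
          ext s
          by_cases hs : s ∈ Ico (u - ε) u
          · have hsS : (s, u) ∈ S := ⟨hs.2, by linarith [hs.1]⟩
            simp [hs, hsS]
          · have hsS : (s, u) ∉ S := fun h => hs ⟨by linarith [h.2], h.1⟩
            simp [hs, hsS]
        rw [hSu, integral_indicator measurableSet_Ico, integral_Ico_eq_integral_Ioc,
          intervalIntegral.integral_of_le (by linarith)]

theorem tendsto_integral_mul_sub_div (hgm : Measurable g) (hgM : ∀ s, |g s| ≤ M)
    (hg0 : ∀ s ∉ Ioc a b, g s = 0) (hgc : ∀ᵐ u ∂F.measure, ContinuousAt g u) :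
    Tendsto (fun ε => (∫ s, g s * (F (s + ε) - F s)) / ε) (𝓝[>] 0)
      (𝓝 (∫ u, g u ∂F.measure)) := by
  have hgi : Integrable g := integrable_of_norm_le_on_of_eq_zero_off (s := Ioc a b)
    measurableSet_Ioc measure_Ioc_lt_top.ne hgm.aestronglyMeasurable (fun s _ => hgM s) hg0
  have hprim : ∀ ε, Continuous fun u => ∫ s in u - ε..u, g s := fun ε => by
    have hc := intervalIntegral.continuous_primitive (fun _ _ => hgi.intervalIntegrable) 0
    have hsub : (fun u => ∫ s in u - ε..u, g s) =
        fun u => (∫ s in 0..u, g s) - ∫ s in 0..u - ε, g s := funext fun u =>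
      (intervalIntegral.integral_interval_sub_left hgi.intervalIntegrable
        hgi.intervalIntegrable).symm
    rw [hsub]
    exact hc.sub (hc.comp (continuous_sub_right ε))
  have hlim : Tendsto (fun ε => ∫ u, (∫ s in u - ε..u, g s) / ε ∂F.measure) (𝓝[>] 0)
      (𝓝 (∫ u, g u ∂F.measure)) := by
    refine tendsto_integral_filter_of_dominated_convergence ((Ioc a (b + 1)).indicator fun _ => M)
      (Eventually.of_forall fun ε => ((hprim ε).div_const ε).aestronglyMeasurable) ?_ ?_ ?_
    · filter_upwards [Ioo_mem_nhdsGT zero_lt_one] with ε hε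
      exact ae_of_all _ (abs_intervalIntegral_left_div_le hgM hg0 hε)
    · exact (integrable_indicator_iff measurableSet_Ioc).2
        (integrableOn_const measure_Ioc_lt_top.ne)
    · exact hgc.mono fun u hu => hu.tendsto_intervalIntegral_left_div hgm.aestronglyMeasurable
  refine hlim.congr' ?_
  filter_upwards [self_mem_nhdsWithin] with ε (hε : 0 < ε)
  rw [integral_div, F.integral_mul_sub_eq_integral_intervalIntegral hgm hgM hg0 hε.le]

theorem ae_continuousAt_indicator_Ioc (hF : Continuous F) {Y : ℝ → ℝ} {D : Set ℝ}
    (hD : D.Countable) (hYcont : ∀ s ∉ D, ContinuousAt Y s) (a b : ℝ) :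
    ∀ᵐ u ∂F.measure, ContinuousAt ((Ioc a b).indicator Y) u := by
  have := F.nullSingletonClass_of_continuous hF
  have hnull : F.measure (insert a (insert b D)) = 0 := ((hD.insert b).insert a).measure_zero _
  filter_upwards [measure_eq_zero_iff_ae_notMem.1 hnull] with u hu
  simp only [mem_insert_iff, not_or] at hu
  exact (hYcont u hu.2.2).indicator_Ioc hu.1 hu.2.1

end StieltjesFunction

theorem stmt7_general (T : ℝ) (F G : StieltjesFunction ℝ) (X Y : ℝ → ℝ)
    (hFc : Continuous F) (hGc : Continuous G)
    (hXFG : ∀ t, X t = F t - G t)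
    (MY : ℝ) (hYb : ∀ t, |Y t| ≤ MY)
    (D : Set ℝ) (hD : D.Countable) (hYcont : ∀ s ∉ D, ContinuousAt Y s) :
    ∀ t ∈ Set.Icc (0:ℝ) T,
      Tendsto (fun ε => Iminus ε Y X t) (nhdsWithin 0 (Set.Ioi 0))
        (nhds ((∫ s in Set.Ioc (0:ℝ) t, Y s ∂F.measure) -
               ∫ s in Set.Ioc (0:ℝ) t, Y s ∂G.measure)) := by
  intro t ht
  set g := (Ioc 0 t).indicator Y
  have hgm : Measurable g := (measurable_of_countable_not_continuousAt
    (hD.mono fun s hs => by_contra fun h => hs (hYcont s h))).indicator measurableSet_Ioc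
  have hgM : ∀ s, |g s| ≤ MY := fun s => by
    by_cases hs : s ∈ Ioc 0 t <;> simp [g, hs, hYb, (abs_nonneg _).trans (hYb 0)]
  have hg0 : ∀ s ∉ Ioc 0 t, g s = 0 := fun s hs => indicator_of_notMem hs Y
  have hF := F.tendsto_integral_mul_sub_div hgm hgM hg0
    (F.ae_continuousAt_indicator_Ioc hFc hD hYcont 0 t)
  have hG := G.tendsto_integral_mul_sub_div hgm hgM hg0
    (G.ae_continuousAt_indicator_Ioc hGc hD hYcont 0 t)
  rw [integral_indicator measurableSet_Ioc] at hF hG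
  refine (hF.sub hG).congr' ?_
  filter_upwards [self_mem_nhdsWithin] with ε (hε : 0 < ε)
  rw [← sub_div, ← integral_sub (F.integrable_mul_sub hgm hgM hg0 hε.le)
    (G.integrable_mul_sub hgm hgM hg0 hε.le), Iminus, intervalIntegral.integral_of_le ht.1,
    integral_div, ← integral_indicator measurableSet_Ioc]
  congr 2 with s
  rw [indicator_mul_left, hXFG, hXFG]
  ring

/-- if `X` is continuous of bounded variation (written as the difference
`F − G` of two continuous Stieltjes functions) and `Y` is bounded with at most countably
many discontinuities, then `∫₀ᵗ Y d⁻X` exists and equals the Lebesgue–Stieltjes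
integral `∫₀ᵗ Y dX = ∫_{(0,t]} Y dF − ∫_{(0,t]} Y dG`. -/
theorem stmt7 (T : ℝ) (hT : 0 < T) (F G : StieltjesFunction ℝ) (X Y : ℝ → ℝ)
    (hFc : Continuous F) (hGc : Continuous G)
    (hXFG : ∀ t, X t = F t - G t)
    (hXe : ExtConst T X) (hYe : ExtConst T Y)
    (MY : ℝ) (hYb : ∀ t, |Y t| ≤ MY)
    (D : Set ℝ) (hD : D.Countable) (hYcont : ∀ s ∉ D, ContinuousAt Y s) :
    ∀ t ∈ Set.Icc (0:ℝ) T,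
      Tendsto (fun ε => Iminus ε Y X t) (nhdsWithin 0 (Set.Ioi 0))
        (nhds ((∫ s in Set.Ioc (0:ℝ) t, Y s ∂F.measure) -
               ∫ s in Set.Ioc (0:ℝ) t, Y s ∂G.measure)) :=
  stmt7_general T F G X Y hFc hGc hXFG MY hYb D hD hYcont
end

section
/- If X : [0,T] → ℝ is absolutely continuous with derivative X' ∈ L¹([0,T]) and Y : [0,T] → ℝ is continuous, then the forward integral ∫₀ᵗ Y d⁻X exists and equals ∫₀ᵗ Y(s) X'(s) ds for every t ∈ [0,T]. -/
open MeasureTheory Filter Set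

/-!
Extend `X'` by zero outside `[0,T]` to an integrable `g`; then `X` is a primitive of `g` on
`[0,∞)`. By Fubini, the `ε`-forward integral equals `∫ u, A_ε(u) g(u)`, where `A_ε(u)` is the
average of `Y 1_(0,t]` over `[u-ε,u]`. These averages are bounded by `sup |Y|` and converge to
`Y 1_(0,t]` almost everywhere by the Lebesgue differentiation theorem, so dominated convergence
gives the limit `∫₀ᵗ Y g = ∫₀ᵗ Y X'`.
-/

open Topology

noncomputable def backwardAverage (f : ℝ → ℝ) (ε u : ℝ) : ℝ :=
  ε⁻¹ * ∫ s in (u - ε)..u, f s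

section

variable {f g : ℝ → ℝ}

theorem integral_mul_intervalIntegral_add_swap {ε : ℝ} (hε : 0 ≤ ε) (hf : Integrable f)
    (hg : Integrable g) :
    ∫ s, f s * ∫ u in s..s + ε, g u = ∫ u, (∫ s in (u - ε)..u, f s) * g u := by
  set A : Set (ℝ × ℝ) := {p | p.1 < p.2 ∧ p.2 ≤ p.1 + ε}
  have hA : MeasurableSet A :=
    (measurableSet_lt measurable_fst measurable_snd).inter
      (measurableSet_le measurable_snd (measurable_fst.add_const ε))
  have hF : Integrable (A.indicator fun p => f p.1 * g p.2) (volume.prod volume) :=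
    (hf.mul_prod hg).indicator hA
  calc ∫ s, f s * ∫ u in s..s + ε, g u
      = ∫ s, ∫ u, A.indicator (fun p => f p.1 * g p.2) (s, u) := by
        congr 1 with s
        rw [intervalIntegral.integral_of_le (by linarith), ← integral_const_mul,
          ← integral_indicator measurableSet_Ioc]
        rfl
    _ = ∫ u, ∫ s, A.indicator (fun p => f p.1 * g p.2) (s, u) := integral_integral_swap hF
    _ = ∫ u, (∫ s in (u - ε)..u, f s) * g u := by
        congr 1 with u
        rw [intervalIntegral.integral_of_le (by linarith), ← integral_Ico_eq_integral_Ioc,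
          ← integral_mul_const, ← integral_indicator measurableSet_Ico]
        congr 1 with s
        simp only [indicator_apply, A, mem_ofPred_eq, mem_Ico, sub_le_iff_le_add, and_comm]

theorem norm_backwardAverage_le {C ε : ℝ} (hε : 0 < ε) (hC : ∀ s, ‖f s‖ ≤ C) (u : ℝ) :
    ‖backwardAverage f ε u‖ ≤ C := by
  have h := intervalIntegral.norm_integral_le_of_norm_le_const (a := u - ε) (b := u)
    fun s _ => hC s
  rw [sub_sub_cancel, abs_of_pos hε] at h
  rw [backwardAverage, norm_mul, norm_inv, Real.norm_of_nonneg hε.le, inv_mul_le_iff₀ hε,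
    mul_comm]
  exact h

theorem continuous_backwardAverage (hf : Integrable f) (ε : ℝ) :
    Continuous (backwardAverage f ε) := by
  have hF := intervalIntegral.continuous_primitive (fun _ _ => hf.intervalIntegrable) 0
  have h : backwardAverage f ε =
      fun u => ε⁻¹ * ((∫ s in (0:ℝ)..u, f s) - ∫ s in (0:ℝ)..(u - ε), f s) := by
    funext u
    rw [backwardAverage,
      intervalIntegral.integral_interval_sub_left hf.intervalIntegrable hf.intervalIntegrable]
  rw [h]
  exact continuous_const.mul (hF.sub (hF.comp (continuous_sub_right ε)))

theorem ae_tendsto_backwardAverage (hf : Integrable f) :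
    ∀ᵐ u, Tendsto (fun ε => backwardAverage f ε u) (𝓝[>] 0) (𝓝 (f u)) := by
  filter_upwards [_root_.LocallyIntegrable.ae_hasDerivAt_integral hf.locallyIntegrable] with u hu
  have h := (hu 0).tendsto_slope_zero_left.comp (neg_zero (G := ℝ) ▸ tendsto_neg_nhdsGT_neg)
  refine h.congr fun ε => ?_
  rw [Function.comp_apply, smul_eq_mul, backwardAverage, ← sub_eq_add_neg, inv_neg,
    ← intervalIntegral.integral_interval_sub_left (a := 0) (b := u) (c := u - ε)
      hf.intervalIntegrable hf.intervalIntegrable]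
  ring

theorem tendsto_integral_backwardAverage_mul {C : ℝ} (hf : Integrable f) (hC : ∀ s, ‖f s‖ ≤ C)
    (hg : Integrable g) :
    Tendsto (fun ε => ∫ u, backwardAverage f ε u * g u) (𝓝[>] 0) (𝓝 (∫ u, f u * g u)) := by
  refine tendsto_integral_filter_of_dominated_convergence (fun u => C * ‖g u‖)
    (Eventually.of_forall fun ε =>
      (continuous_backwardAverage hf ε).aestronglyMeasurable.mul hg.aestronglyMeasurable)
    ?_ (hg.norm.const_mul C) ?_
  · filter_upwards [self_mem_nhdsWithin] with ε hε
    refine Eventually.of_forall fun u => ?_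
    rw [norm_mul]
    exact mul_le_mul_of_nonneg_right (norm_backwardAverage_le hε hC u) (norm_nonneg _)
  · filter_upwards [ae_tendsto_backwardAverage hf] with u hu
    exact hu.mul_const (g u)

end

theorem eq_add_intervalIntegral_indicator {T : ℝ} {X X' : ℝ → ℝ} (hT : 0 ≤ T)
    (hXT : ∀ t, T ≤ t → X t = X T)
    (hAC : ∀ t ∈ Icc (0:ℝ) T, X t = X 0 + ∫ s in (0:ℝ)..t, X' s) {b : ℝ} (hb : 0 ≤ b) :
    X b = X 0 + ∫ s in (0:ℝ)..b, (Icc 0 T).indicator X' s := by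
  have hXmin : X b = X (min b T) := by
    rcases le_total b T with h | h
    · rw [min_eq_left h]
    · rw [min_eq_right h, hXT b h]
  have hIoc : Ioc 0 b ∩ Icc 0 T = Ioc 0 (min b T) := by
    ext x
    simp only [mem_inter_iff, mem_Ioc, mem_Icc, le_min_iff]
    constructor
    · rintro ⟨⟨h0, hb⟩, -, hT⟩
      exact ⟨h0, hb, hT⟩
    · rintro ⟨h0, hb, hT⟩
      exact ⟨⟨h0, hb⟩, h0.le, hT⟩
  rw [hXmin, hAC _ ⟨le_min hb hT, min_le_right _ _⟩, intervalIntegral.integral_of_le hb,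
    setIntegral_indicator measurableSet_Icc, hIoc, intervalIntegral.integral_of_le (le_min hb hT)]

theorem iminus_eq_integral_backwardAverage_mul {ε t : ℝ} {X Y g : ℝ → ℝ} (hε : 0 < ε)
    (ht : 0 ≤ t) (hY : IntegrableOn Y (Ioc 0 t)) (hg : Integrable g)
    (hX : ∀ s, 0 ≤ s → X s = X 0 + ∫ u in (0:ℝ)..s, g u) :
    Iminus ε Y X t = ∫ u, backwardAverage ((Ioc 0 t).indicator Y) ε u * g u := by
  have hXsub : ∀ s ∈ Ioc 0 t, X (s + ε) - X s = ∫ u in s..s + ε, g u := fun s hs => by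
    rw [hX s hs.1.le, hX (s + ε) (by linarith [hs.1]), add_sub_add_left_eq_sub,
      intervalIntegral.integral_interval_sub_left hg.intervalIntegrable hg.intervalIntegrable]
  calc Iminus ε Y X t = ∫ s in Ioc 0 t, ε⁻¹ * (Y s * ∫ u in s..s + ε, g u) := by
        rw [Iminus, intervalIntegral.integral_of_le ht]
        refine setIntegral_congr_fun measurableSet_Ioc fun s hs => ?_
        rw [hXsub s hs, div_eq_inv_mul]
    _ = ε⁻¹ * ∫ s, (Ioc 0 t).indicator Y s * ∫ u in s..s + ε, g u := by
        rw [integral_const_mul, ← integral_indicator measurableSet_Ioc]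
        simp only [indicator_mul_left]
    _ = ε⁻¹ * ∫ u, (∫ s in (u - ε)..u, (Ioc 0 t).indicator Y s) * g u := by
        rw [integral_mul_intervalIntegral_add_swap hε.le
          ((integrable_indicator_iff measurableSet_Ioc).2 hY) hg]
    _ = ∫ u, backwardAverage ((Ioc 0 t).indicator Y) ε u * g u := by
        rw [← integral_const_mul]
        simp only [backwardAverage, mul_assoc]

theorem stmt9_general (T : ℝ) (X Y X' : ℝ → ℝ)
    (hYc : Continuous Y)
    (hXe : ExtConst T X)
    (hX'int : IntegrableOn X' (Set.Icc 0 T))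
    (hAC : ∀ t ∈ Set.Icc (0:ℝ) T, X t = X 0 + ∫ s in (0:ℝ)..t, X' s) :
    ∀ t ∈ Set.Icc (0:ℝ) T,
      Tendsto (fun ε => Iminus ε Y X t) (nhdsWithin 0 (Set.Ioi 0))
        (nhds (∫ s in (0:ℝ)..t, Y s * X' s)) := by
  rintro t ⟨ht0, htT⟩
  set g := (Icc 0 T).indicator X'
  set f := (Ioc 0 t).indicator Y
  have hg : Integrable g := (integrable_indicator_iff measurableSet_Icc).2 hX'int
  have hf : Integrable f := (integrable_indicator_iff measurableSet_Ioc).2 hYc.integrableOn_Ioc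
  obtain ⟨C, hC⟩ := isCompact_Icc.exists_bound_of_continuousOn (hYc.continuousOn (s := Icc 0 t))
  have hfC : ∀ s, ‖f s‖ ≤ C := fun s => by
    by_cases hs : s ∈ Ioc 0 t
    · simpa [f, hs] using hC s (Ioc_subset_Icc_self hs)
    · simpa [f, hs] using (norm_nonneg _).trans (hC 0 ⟨le_rfl, ht0⟩)
  have hlimit : ∫ u, f u * g u = ∫ s in (0:ℝ)..t, Y s * X' s := by
    rw [intervalIntegral.integral_of_le ht0, ← integral_indicator measurableSet_Ioc]
    congr 1 with u
    by_cases hu : u ∈ Ioc 0 t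
    · simp [f, g, hu, indicator_of_mem (show u ∈ Icc 0 T from ⟨hu.1.le, hu.2.trans htT⟩)]
    · simp [f, hu]
  rw [← hlimit]
  refine (tendsto_integral_backwardAverage_mul hf hfC hg).congr' ?_
  filter_upwards [self_mem_nhdsWithin] with ε hε
  exact (iminus_eq_integral_backwardAverage_mul hε ht0 hYc.integrableOn_Ioc hg
    fun s hs => eq_add_intervalIntegral_indicator (ht0.trans htT) hXe.2 hAC hs).symm

/-- if `X` is absolutely continuous with derivative `X' ∈ L¹([0,T])`
and `Y` is continuous, then the forward integral `∫₀ᵗ Y d⁻X` exists and equals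
`∫₀ᵗ Y(s) X'(s) ds` for every `t ∈ [0,T]`. -/
theorem stmt9 (T : ℝ) (hT : 0 < T) (X Y X' : ℝ → ℝ)
    (hXc : Continuous X) (hYc : Continuous Y)
    (hXe : ExtConst T X) (hYe : ExtConst T Y)
    (hX'int : IntegrableOn X' (Set.Icc 0 T))
    (hAC : ∀ t ∈ Set.Icc (0:ℝ) T, X t = X 0 + ∫ s in (0:ℝ)..t, X' s) :
    ∀ t ∈ Set.Icc (0:ℝ) T,
      Tendsto (fun ε => Iminus ε Y X t) (nhdsWithin 0 (Set.Ioi 0))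
        (nhds (∫ s in (0:ℝ)..t, Y s * X' s)) :=
  stmt9_general T X Y X' hYc hXe hX'int hAC
end

section
/- Let X ∈ C^α([0,T]) and Y ∈ C^β([0,T]) with α, β > 0 and α + β > 1. Then the forward integral ∫₀^· Y d⁻X exists (uniformly on [0,T]) and coincides with the Young integral ∫₀^· Y d^{(y)}X; the same holds for the backward and symmetric integrals. -/
open MeasureTheory Filter Set

/-- The `ε`-symmetric integral `I⁰(ε,Y,dX)(t)`. -/
noncomputable def Izero (ε : ℝ) (Y X : ℝ → ℝ) (t : ℝ) : ℝ :=
  ∫ s in (0:ℝ)..t, Y s * (X (s + ε) - X (s - ε)) / (2 * ε)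

/-! Each regularized integral is the classical integral `∫₀ᵗ Y dX_ε` against the `C¹`
sliding average `X_ε(s) = (q - p)⁻¹ ∫_{s+p}^{s+q} X` with `[p, q] ⊆ [-ε, ε]`, whose derivative
is the forward, backward or symmetric difference quotient. Since `X_ε - X` is `C^α` and
uniformly `O(ε^α)`, `X_ε → X` in `C^{α₀}` for every `α₀ < α`. On the other hand the
Young–Loève estimate `|∫₀ᵗ Y dD - Y 0 (D t - D 0)| ≲ ‖Y‖_β ‖D‖_γ t^{γ+β}`, obtained from dyadic
Riemann sums whose successive differences decay like `2^{k(1-γ-β)}`, makes `D ↦ ∫₀ᵗ Y dD`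
Lipschitz on `C¹` for the `C^γ`-seminorm when `γ + β > 1`. So the integrals along any `C¹`
approximation of `X` in such a Hölder norm converge uniformly, all to the same limit: the
Young integral. -/

open Topology

namespace HolderC

variable {T γ N M : ℝ} {f g : ℝ → ℝ}

theorem nonneg (hT : 0 < T) (h : HolderC T γ N f) : 0 ≤ N := by
  have h0T := h 0 (left_mem_Icc.2 hT.le) T (right_mem_Icc.2 hT.le)
  have : 0 < |T - 0| ^ γ := by simp only [sub_zero, abs_of_pos hT]; positivity
  nlinarith [abs_nonneg (f T - f 0)]

theorem sub (hf : HolderC T γ N f) (hg : HolderC T γ M g) :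
    HolderC T γ (N + M) (fun t => f t - g t) := fun s hs t ht =>
  calc |(f t - g t) - (f s - g s)| ≤ |f t - f s| + |g t - g s| := by
        rw [sub_sub_sub_comm]; exact abs_sub _ _
    _ ≤ (N + M) * |t - s| ^ γ := by linarith [hf s hs t ht, hg s hs t ht]

theorem mono {t : ℝ} (h : HolderC T γ N f) (htT : t ≤ T) : HolderC t γ N f :=
  fun s hs u hu => h s ⟨hs.1, hs.2.trans htT⟩ u ⟨hu.1, hu.2.trans htT⟩

theorem of_exponent_le {a : ℝ} (hT : 0 < T) (h : HolderC T a N f) (hγ : 0 < γ) (hγa : γ ≤ a) :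
    HolderC T γ (N * T ^ (a - γ)) f := by
  intro s hs t ht
  have hN := h.nonneg hT
  have hts : |t - s| ≤ T :=
    abs_sub_le_iff.2 ⟨by linarith [ht.2, hs.1], by linarith [hs.2, ht.1]⟩
  calc |f t - f s| ≤ N * |t - s| ^ a := h s hs t ht
    _ = N * (|t - s| ^ γ * |t - s| ^ (a - γ)) := by
        rw [← Real.rpow_add' (abs_nonneg _) (by linarith), add_sub_cancel]
    _ ≤ N * (|t - s| ^ γ * T ^ (a - γ)) := by gcongr
    _ = N * T ^ (a - γ) * |t - s| ^ γ := by ring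

end HolderC

theorem ExtConst.eq_comp_projIcc {T : ℝ} {f : ℝ → ℝ} (hf : ExtConst T f) (hT : 0 ≤ T) (s : ℝ) :
    f s = f (projIcc 0 T hT s) := by
  rcases le_total s 0 with hs | hs
  · rw [projIcc_of_le_left hT hs, hf.1 s hs]
  rcases le_total T s with hs' | hs'
  · rw [projIcc_of_right_le hT hs', hf.2 s hs']
  · rw [projIcc_of_mem hT ⟨hs, hs'⟩]

theorem HolderC.abs_sub_le_of_extConst {T γ N : ℝ} {f : ℝ → ℝ} (hT : 0 < T) (hγ : 0 ≤ γ)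
    (h : HolderC T γ N f) (hf : ExtConst T f) (s t : ℝ) : |f t - f s| ≤ N * |t - s| ^ γ := by
  rw [hf.eq_comp_projIcc hT.le s, hf.eq_comp_projIcc hT.le t]
  refine (h _ (projIcc 0 T hT.le s).2 _ (projIcc 0 T hT.le t).2).trans ?_
  exact mul_le_mul_of_nonneg_left
    (Real.rpow_le_rpow (abs_nonneg _) (abs_projIcc_sub_projIcc hT.le) hγ) (h.nonneg hT)

noncomputable def integralMulDeriv (Y D : ℝ → ℝ) (t : ℝ) : ℝ :=
  ∫ s in (0:ℝ)..t, Y s * deriv D s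

theorem integralMulDeriv_sub {Y D₁ D₂ : ℝ → ℝ} (hY : Continuous Y) (h₁ : ContDiff ℝ 1 D₁)
    (h₂ : ContDiff ℝ 1 D₂) (t : ℝ) :
    integralMulDeriv Y D₁ t - integralMulDeriv Y D₂ t =
      integralMulDeriv Y (fun s => D₁ s - D₂ s) t := by
  have hc₁ := h₁.continuous_deriv le_rfl
  have hc₂ := h₂.continuous_deriv le_rfl
  rw [integralMulDeriv, integralMulDeriv, ← intervalIntegral.integral_sub
    (Continuous.intervalIntegrable (by fun_prop) _ _)
    (Continuous.intervalIntegrable (by fun_prop) _ _)]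
  refine intervalIntegral.integral_congr fun s _ => ?_
  rw [deriv_fun_sub (h₁.differentiable one_ne_zero s) (h₂.differentiable one_ne_zero s),
    mul_sub]

theorem abs_integral_mul_deriv_sub_le {Y D : ℝ → ℝ} {a b A B : ℝ} (hab : a ≤ b)
    (hYc : Continuous Y) (hD : ContDiff ℝ 1 D) (hY : ∀ x ∈ Icc a b, |Y x - Y a| ≤ A)
    (hD' : ∀ x ∈ Icc a b, |deriv D x| ≤ B) :
    |(∫ x in a..b, Y x * deriv D x) - Y a * (D b - D a)| ≤ A * B * (b - a) := by
  have hD'c := hD.continuous_deriv le_rfl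
  rw [← intervalIntegral.integral_deriv_eq_sub
      (fun x _ => (hD.differentiable one_ne_zero).differentiableAt) (hD'c.intervalIntegrable a b),
    ← intervalIntegral.integral_const_mul, ← intervalIntegral.integral_sub
      (Continuous.intervalIntegrable (by fun_prop) a b)
      ((hD'c.intervalIntegrable a b).const_mul _)]
  have hA : 0 ≤ A := (abs_nonneg _).trans (hY a (left_mem_Icc.2 hab))
  have hbound : ∀ x ∈ uIoc a b, ‖Y x * deriv D x - Y a * deriv D x‖ ≤ A * B := by
    intro x hx
    rw [uIoc_of_le hab] at hx
    rw [Real.norm_eq_abs, ← sub_mul, abs_mul]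
    exact mul_le_mul (hY x (Ioc_subset_Icc_self hx)) (hD' x (Ioc_subset_Icc_self hx))
      (abs_nonneg _) hA
  simpa [abs_of_nonneg (sub_nonneg.2 hab)] using
    intervalIntegral.norm_integral_le_of_norm_le_const hbound

theorem Finset.sum_range_two_mul {M : Type*} [AddCommMonoid M] (n : ℕ) (f : ℕ → M) :
    ∑ i ∈ range (2 * n), f i = ∑ i ∈ range n, (f (2 * i) + f (2 * i + 1)) := by
  induction n with
  | zero => simp
  | succ n ih =>
    rw [show 2 * (n + 1) = 2 * n + 1 + 1 by ring, sum_range_succ, sum_range_succ, ih,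
      sum_range_succ, add_assoc]

section Dyadic

variable {Y D : ℝ → ℝ} {t β γ NY N : ℝ}

noncomputable def dyadicPt (t : ℝ) (k i : ℕ) : ℝ := t * i / 2 ^ k

theorem dyadicPt_succ_two_mul (t : ℝ) (k i : ℕ) :
    dyadicPt t (k + 1) (2 * i) = dyadicPt t k i := by
  simp only [dyadicPt]; push_cast; rw [pow_succ]; field_simp

theorem dyadicPt_succ_sub (t : ℝ) (k i : ℕ) :
    dyadicPt t k (i + 1) - dyadicPt t k i = t / 2 ^ k := by
  simp only [dyadicPt]; push_cast; ring

theorem dyadicPt_mem_Icc (ht : 0 ≤ t) {k i : ℕ} (hi : i ≤ 2 ^ k) :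
    dyadicPt t k i ∈ Icc 0 t := by
  refine ⟨by unfold dyadicPt; positivity, div_le_of_le_mul₀ (by positivity) ht ?_⟩
  exact mul_le_mul_of_nonneg_left (by exact_mod_cast hi) ht

noncomputable def dyadicSum (Y D : ℝ → ℝ) (t : ℝ) (k : ℕ) : ℝ :=
  ∑ i ∈ Finset.range (2 ^ k),
    Y (dyadicPt t k i) * (D (dyadicPt t k (i + 1)) - D (dyadicPt t k i))

theorem dyadicSum_zero : dyadicSum Y D t 0 = Y 0 * (D t - D 0) := by
  simp [dyadicSum, dyadicPt]

theorem dyadicSum_succ_sub (k : ℕ) :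
    dyadicSum Y D t (k + 1) - dyadicSum Y D t k = ∑ i ∈ Finset.range (2 ^ k),
      (Y (dyadicPt t (k + 1) (2 * i + 1)) - Y (dyadicPt t k i)) *
        (D (dyadicPt t k (i + 1)) - D (dyadicPt t (k + 1) (2 * i + 1))) := by
  rw [dyadicSum, pow_succ, mul_comm, Finset.sum_range_two_mul, dyadicSum,
    ← Finset.sum_sub_distrib]
  refine Finset.sum_congr rfl fun i _ => ?_
  rw [show 2 * i + 1 + 1 = 2 * (i + 1) by ring, dyadicPt_succ_two_mul, dyadicPt_succ_two_mul]
  ring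

theorem two_pow_mul_div_two_pow_rpow (ht : 0 ≤ t) (θ : ℝ) (k : ℕ) :
    (2:ℝ) ^ k * (t / 2 ^ k) ^ θ = t ^ θ * (2 / 2 ^ θ) ^ k := by
  rw [Real.div_rpow ht (by positivity), ← Real.rpow_pow_comm zero_le_two, div_pow]
  field_simp

theorem two_div_two_rpow_lt_one {θ : ℝ} (hθ : 1 < θ) : (2:ℝ) / 2 ^ θ < 1 := by
  rw [div_lt_one (by positivity)]
  simpa using Real.rpow_lt_rpow_of_exponent_lt one_lt_two hθ

theorem abs_dyadicSum_succ_sub_le (ht : 0 < t) (hβ : 0 ≤ β) (hγ : 0 ≤ γ)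
    (hY : HolderC t β NY Y) (hD : HolderC t γ N D) (k : ℕ) :
    |dyadicSum Y D t (k + 1) - dyadicSum Y D t k| ≤
      NY * N * t ^ (γ + β) * (2 / 2 ^ (γ + β)) ^ k := by
  have hh : 0 < t / 2 ^ k := by positivity
  have hhalf : |t / 2 ^ (k + 1)| ≤ t / 2 ^ k := by
    rw [abs_of_pos (by positivity)]
    exact div_le_div_of_nonneg_left ht.le (by positivity)
      (pow_le_pow_right₀ one_le_two k.le_succ)
  have hterm : ∀ i ∈ Finset.range (2 ^ k),
      |(Y (dyadicPt t (k + 1) (2 * i + 1)) - Y (dyadicPt t k i)) *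
        (D (dyadicPt t k (i + 1)) - D (dyadicPt t (k + 1) (2 * i + 1)))| ≤
      NY * (t / 2 ^ k) ^ β * (N * (t / 2 ^ k) ^ γ) := by
    intro i hi
    have hi : i + 1 ≤ 2 ^ k := Finset.mem_range.1 hi
    have ha := dyadicPt_mem_Icc ht.le (k := k) (i := i) (by omega)
    have hb := dyadicPt_mem_Icc ht.le hi
    have hm := dyadicPt_mem_Icc ht.le (k := k + 1) (i := 2 * i + 1) (by rw [pow_succ]; omega)
    have hma : |dyadicPt t (k + 1) (2 * i + 1) - dyadicPt t k i| ≤ t / 2 ^ k := by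
      rw [← dyadicPt_succ_two_mul t k i, dyadicPt_succ_sub]; exact hhalf
    have hbm : |dyadicPt t k (i + 1) - dyadicPt t (k + 1) (2 * i + 1)| ≤ t / 2 ^ k := by
      rw [← dyadicPt_succ_two_mul t k (i + 1), mul_add_one, dyadicPt_succ_sub]; exact hhalf
    rw [abs_mul]
    refine mul_le_mul ((hY _ ha _ hm).trans ?_) ((hD _ hm _ hb).trans ?_) (abs_nonneg _)
      (mul_nonneg (hY.nonneg ht) (by positivity))
    · exact mul_le_mul_of_nonneg_left (Real.rpow_le_rpow (abs_nonneg _) hma hβ) (hY.nonneg ht)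
    · exact mul_le_mul_of_nonneg_left (Real.rpow_le_rpow (abs_nonneg _) hbm hγ) (hD.nonneg ht)
  calc |dyadicSum Y D t (k + 1) - dyadicSum Y D t k|
      ≤ 2 ^ k * (NY * (t / 2 ^ k) ^ β * (N * (t / 2 ^ k) ^ γ)) := by
        rw [dyadicSum_succ_sub]
        refine (Finset.abs_sum_le_sum_abs _ _).trans ?_
        simpa using Finset.sum_le_sum hterm
    _ = NY * N * (2 ^ k * (t / 2 ^ k) ^ (γ + β)) := by rw [Real.rpow_add hh]; ring
    _ = NY * N * t ^ (γ + β) * (2 / 2 ^ (γ + β)) ^ k := by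
        rw [two_pow_mul_div_two_pow_rpow ht.le]; ring

theorem tendsto_dyadicSum (ht : 0 < t) (hβ : 0 < β) (hYc : Continuous Y)
    (hY : HolderC t β NY Y) (hD : ContDiff ℝ 1 D) :
    Tendsto (dyadicSum Y D t) atTop (𝓝 (integralMulDeriv Y D t)) := by
  have hD'c := hD.continuous_deriv le_rfl
  obtain ⟨B, hB⟩ := isCompact_Icc.exists_bound_of_continuousOn hD'c.continuousOn (s := Icc 0 t)
  have hbound : ∀ k : ℕ,
      |dyadicSum Y D t k - integralMulDeriv Y D t| ≤ NY * (t / 2 ^ k) ^ β * B * t := by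
    intro k
    have hsplit : integralMulDeriv Y D t = ∑ i ∈ Finset.range (2 ^ k),
        ∫ s in dyadicPt t k i..dyadicPt t k (i + 1), Y s * deriv D s := by
      rw [intervalIntegral.sum_integral_adjacent_intervals
        (fun i _ => Continuous.intervalIntegrable (by fun_prop) _ _)]
      simp [integralMulDeriv, dyadicPt]
    have hterm : ∀ i ∈ Finset.range (2 ^ k),
        |Y (dyadicPt t k i) * (D (dyadicPt t k (i + 1)) - D (dyadicPt t k i)) -
          ∫ s in dyadicPt t k i..dyadicPt t k (i + 1), Y s * deriv D s| ≤
        NY * (t / 2 ^ k) ^ β * B * (t / 2 ^ k) := by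
      intro i hi
      have hi : i + 1 ≤ 2 ^ k := Finset.mem_range.1 hi
      have ha := dyadicPt_mem_Icc ht.le (k := k) (i := i) (by omega)
      have hb := dyadicPt_mem_Icc ht.le hi
      have hsub : Icc (dyadicPt t k i) (dyadicPt t k (i + 1)) ⊆ Icc 0 t :=
        Icc_subset_Icc ha.1 hb.2
      have hab := dyadicPt_succ_sub t k i
      rw [abs_sub_comm, ← hab]
      refine abs_integral_mul_deriv_sub_le (by rw [← sub_nonneg, hab]; positivity)
        hYc hD (fun x hx => ?_) (fun x hx => hB x (hsub hx))
      refine (hY _ ha _ (hsub hx)).trans (mul_le_mul_of_nonneg_left ?_ (hY.nonneg ht))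
      exact Real.rpow_le_rpow (abs_nonneg _)
        (by rw [abs_of_nonneg (by linarith [hx.1])]; linarith [hx.2]) hβ.le
    calc |dyadicSum Y D t k - integralMulDeriv Y D t|
        ≤ 2 ^ k * (NY * (t / 2 ^ k) ^ β * B * (t / 2 ^ k)) := by
          rw [hsplit, dyadicSum, ← Finset.sum_sub_distrib]
          refine (Finset.abs_sum_le_sum_abs _ _).trans ?_
          simpa using Finset.sum_le_sum hterm
      _ = NY * (t / 2 ^ k) ^ β * B * t := by field_simp
  have hmesh : Tendsto (fun k : ℕ => (t / 2 ^ k) ^ β) atTop (𝓝 0) := by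
    have h := (Real.continuousAt_rpow_const 0 β (Or.inr hβ.le)).tendsto.comp
      ((tendsto_const_nhds (x := t)).div_atTop (tendsto_pow_atTop_atTop_of_one_lt one_lt_two))
    rwa [Real.zero_rpow hβ.ne'] at h
  refine tendsto_iff_dist_tendsto_zero.2 (squeeze_zero (fun _ => dist_nonneg)
    (fun k => (Real.dist_eq _ _).trans_le (hbound k)) ?_)
  simpa using ((hmesh.const_mul NY).mul_const B).mul_const t

theorem abs_integralMulDeriv_sub_le (ht : 0 < t) (hβ : 0 < β) (hγ : 0 ≤ γ) (hθ : 1 < γ + β)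
    (hYc : Continuous Y) (hY : HolderC t β NY Y) (hD : ContDiff ℝ 1 D) (hDH : HolderC t γ N D) :
    |integralMulDeriv Y D t - Y 0 * (D t - D 0)| ≤
      NY * N * t ^ (γ + β) / (1 - 2 / 2 ^ (γ + β)) := by
  rw [← dyadicSum_zero, abs_sub_comm, ← Real.dist_eq]
  refine dist_le_of_le_geometric_of_tendsto₀ _ _ (two_div_two_rpow_lt_one hθ) (fun k => ?_)
    (tendsto_dyadicSum ht hβ hYc hY hD)
  rw [dist_comm, Real.dist_eq]
  exact abs_dyadicSum_succ_sub_le ht hβ.le hγ hY hDH k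

end Dyadic

theorem tendstoUniformlyOn_of_dist_le {ι α : Type*} {l : Filter ι} {s : Set α}
    {F : ι → α → ℝ} {f : α → ℝ} {b : ι → ℝ} (hb : Tendsto b l (𝓝 0))
    (h : ∀ᶠ i in l, ∀ x ∈ s, dist (f x) (F i x) ≤ b i) : TendstoUniformlyOn F f l s := by
  refine (Metric.uniformity_basis_dist_le.tendstoUniformlyOn_iff_of_uniformity).2 fun ε hε => ?_
  filter_upwards [h, hb.eventually (eventually_le_nhds hε)] with i hi hbi x hx
  exact (hi x hx).trans hbi

section Young

variable {T β γ NY : ℝ} {Y X : ℝ → ℝ}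

theorem exists_abs_integralMulDeriv_le (hT : 0 < T) (hβ : 0 < β) (hγ : 0 ≤ γ) (hθ : 1 < γ + β)
    (hYc : Continuous Y) (hY : HolderC T β NY Y) :
    ∃ K, ∀ D N, ContDiff ℝ 1 D → HolderC T γ N D →
      ∀ t ∈ Icc 0 T, |integralMulDeriv Y D t| ≤ K * N := by
  refine ⟨|Y 0| * T ^ γ + NY * T ^ (γ + β) / (1 - 2 / 2 ^ (γ + β)),
    fun D N hD hDH t ht => ?_⟩
  have hr : 0 < 1 - (2:ℝ) / 2 ^ (γ + β) := by linarith [two_div_two_rpow_lt_one hθ]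
  have hN := hDH.nonneg hT
  have hNY := hY.nonneg hT
  rcases ht.1.eq_or_lt with rfl | ht0
  · simp only [integralMulDeriv, intervalIntegral.integral_same, abs_zero]
    positivity
  have hYL := abs_integralMulDeriv_sub_le ht0 hβ hγ hθ hYc (hY.mono ht.2) hD (hDH.mono ht.2)
  have hD0 : |D t - D 0| ≤ N * t ^ γ := by
    simpa [abs_of_pos ht0] using hDH 0 (left_mem_Icc.2 hT.le) t ht
  calc |integralMulDeriv Y D t|
      ≤ |integralMulDeriv Y D t - Y 0 * (D t - D 0)| + |Y 0| * |D t - D 0| := by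
        rw [← abs_mul]
        simpa using
          abs_add_le (integralMulDeriv Y D t - Y 0 * (D t - D 0)) (Y 0 * (D t - D 0))
    _ ≤ NY * N * t ^ (γ + β) / (1 - 2 / 2 ^ (γ + β)) + |Y 0| * (N * t ^ γ) := by gcongr
    _ ≤ NY * N * T ^ (γ + β) / (1 - 2 / 2 ^ (γ + β)) + |Y 0| * (N * T ^ γ) := by
        gcongr <;> linarith [ht.2]
    _ = _ := by ring

theorem exists_abs_integralMulDeriv_sub_le (hT : 0 < T) (hβ : 0 < β) (hγ : 0 ≤ γ)
    (hθ : 1 < γ + β) (hYc : Continuous Y) (hY : HolderC T β NY Y) (X : ℝ → ℝ) :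
    ∃ K, ∀ D₁ D₂ N₁ N₂, ContDiff ℝ 1 D₁ → ContDiff ℝ 1 D₂ →
      HolderC T γ N₁ (fun t => D₁ t - X t) → HolderC T γ N₂ (fun t => D₂ t - X t) →
      ∀ t ∈ Icc 0 T,
        |integralMulDeriv Y D₁ t - integralMulDeriv Y D₂ t| ≤ K * (N₁ + N₂) := by
  obtain ⟨K, hK⟩ := exists_abs_integralMulDeriv_le hT hβ hγ hθ hYc hY
  refine ⟨K, fun D₁ D₂ N₁ N₂ h₁ h₂ hH₁ hH₂ t ht => ?_⟩
  rw [integralMulDeriv_sub hYc h₁ h₂]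
  refine hK _ _ (h₁.sub h₂) ?_ t ht
  convert hH₁.sub hH₂ using 2
  ring

variable {Z : ℕ → ℝ → ℝ} {ZN : ℕ → ℝ}

theorem exists_tendsto_integralMulDeriv (hT : 0 < T) (hβ : 0 < β) (hγ : 0 ≤ γ)
    (hθ : 1 < γ + β) (hYc : Continuous Y) (hY : HolderC T β NY Y)
    (hZ : ∀ n, ContDiff ℝ 1 (Z n) ∧ HolderC T γ (ZN n) (fun t => Z n t - X t))
    (hZN : Tendsto ZN atTop (𝓝 0)) :
    ∃ YI : ℝ → ℝ, ∀ t ∈ Icc 0 T,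
      Tendsto (fun n => integralMulDeriv Y (Z n) t) atTop (𝓝 (YI t)) := by
  obtain ⟨K, hK⟩ := exists_abs_integralMulDeriv_sub_le hT hβ hγ hθ hYc hY X
  have hcauchy : ∀ t ∈ Icc 0 T, CauchySeq fun n => integralMulDeriv Y (Z n) t := by
    intro t ht
    rw [cauchySeq_iff_tendsto_dist_atTop_0]
    refine squeeze_zero (fun _ => dist_nonneg) (fun p => (Real.dist_eq _ _).trans_le
      (hK _ _ _ _ (hZ p.1).1 (hZ p.2).1 (hZ p.1).2 (hZ p.2).2 t ht)) ?_
    rw [← prod_atTop_atTop_eq]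
    simpa using ((hZN.comp tendsto_fst).add (hZN.comp tendsto_snd)).const_mul K
  exact ⟨fun t => limUnder atTop fun n => integralMulDeriv Y (Z n) t,
    fun t ht => (hcauchy t ht).tendsto_limUnder⟩

theorem tendstoUniformlyOn_integralMulDeriv {ι : Type*} {l : Filter ι} (hT : 0 < T)
    (hβ : 0 < β) (hγ : 0 ≤ γ) (hθ : 1 < γ + β) (hYc : Continuous Y) (hY : HolderC T β NY Y)
    (hZ : ∀ n, ContDiff ℝ 1 (Z n) ∧ HolderC T γ (ZN n) (fun t => Z n t - X t))
    (hZN : Tendsto ZN atTop (𝓝 0)) {YI : ℝ → ℝ}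
    (hYI : ∀ t ∈ Icc 0 T, Tendsto (fun n => integralMulDeriv Y (Z n) t) atTop (𝓝 (YI t)))
    {W : ι → ℝ → ℝ} {M : ι → ℝ} (hM : Tendsto M l (𝓝 0))
    (hW : ∀ᶠ i in l, ContDiff ℝ 1 (W i) ∧ HolderC T γ (M i) (fun t => W i t - X t)) :
    TendstoUniformlyOn (fun i => integralMulDeriv Y (W i)) YI l (Icc 0 T) := by
  obtain ⟨K, hK⟩ := exists_abs_integralMulDeriv_sub_le hT hβ hγ hθ hYc hY X
  refine tendstoUniformlyOn_of_dist_le (b := fun i => K * M i)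
    (by simpa using hM.const_mul K) ?_
  filter_upwards [hW] with i hWi t ht
  have hlim : Tendsto (fun n => K * (M i + ZN n)) atTop (𝓝 (K * M i)) := by
    simpa using (hZN.const_add (M i)).const_mul K
  rw [dist_comm, Real.dist_eq]
  exact le_of_tendsto_of_tendsto' ((hYI t ht).const_sub _).abs hlim
    fun n => hK _ _ _ _ hWi.1 (hZ n).1 hWi.2 (hZ n).2 t ht

theorem exists_youngIntegral (hT : 0 < T) (hβ : 0 < β) (hγ : 0 < γ) (hθ : 1 < γ + β)
    (hYc : Continuous Y) (hY : HolderC T β NY Y)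
    (hZ : ∀ n, ContDiff ℝ 1 (Z n) ∧ HolderC T γ (ZN n) (fun t => Z n t - X t))
    (hZN : Tendsto ZN atTop (𝓝 0)) :
    ∃ YI : ℝ → ℝ, ∀ γ', 0 < γ' → 1 < γ' + β →
      ∀ {ι : Type} {l : Filter ι} {W : ι → ℝ → ℝ} {M : ι → ℝ}, Tendsto M l (𝓝 0) →
      (∀ᶠ i in l, ContDiff ℝ 1 (W i) ∧ HolderC T γ' (M i) (fun t => W i t - X t)) →
      TendstoUniformlyOn (fun i => integralMulDeriv Y (W i)) YI l (Icc 0 T) := by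
  obtain ⟨YI, hYI⟩ := exists_tendsto_integralMulDeriv hT hβ hγ.le hθ hYc hY hZ hZN
  refine ⟨YI, fun γ' hγ' hθ' ι l W M hM hW => ?_⟩
  have hm : 0 < min γ γ' := lt_min hγ hγ'
  have hθm : 1 < min γ γ' + β := by
    rcases min_choice γ γ' with h | h <;> rw [h] <;> assumption
  exact tendstoUniformlyOn_integralMulDeriv hT hβ hm.le hθm hYc hY
    (fun n => ⟨(hZ n).1, (hZ n).2.of_exponent_le hT hm (min_le_left _ _)⟩)
    (by simpa using hZN.mul_const (T ^ (γ - min γ γ'))) hYI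
    (by simpa using hM.mul_const (T ^ (γ' - min γ γ')))
    (hW.mono fun i hi => ⟨hi.1, hi.2.of_exponent_le hT hm (min_le_right _ _)⟩)

end Young

theorem Real.rpow_min_le {x ε α α₀ : ℝ} (hx : 0 ≤ x) (hε : 0 < ε) (hα₀ : 0 < α₀)
    (hα₀α : α₀ ≤ α) : min x ε ^ α ≤ ε ^ (α - α₀) * x ^ α₀ := by
  have hsplit : ∀ y : ℝ, 0 ≤ y → y ^ α = y ^ (α - α₀) * y ^ α₀ := fun y hy => by
    rw [← Real.rpow_add' hy (by linarith), sub_add_cancel]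
  rcases le_total x ε with h | h
  · rw [min_eq_left h, hsplit x hx]
    gcongr
  · rw [min_eq_right h, hsplit ε hε.le]
    gcongr

noncomputable def slidingAvg (X : ℝ → ℝ) (p q s : ℝ) : ℝ :=
  (∫ u in (s + p)..(s + q), X u) / (q - p)

section SlidingAvg

variable {X : ℝ → ℝ} {p q ε N α : ℝ}

theorem hasDerivAt_slidingAvg (hX : Continuous X) (p q s : ℝ) :
    HasDerivAt (slidingAvg X p q) ((X (s + q) - X (s + p)) / (q - p)) s := by
  have hG : ∀ a, HasDerivAt (fun x => ∫ u in (0:ℝ)..x, X u) (X a) a :=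
    fun a => (hX.integral_hasStrictDerivAt 0 a).hasDerivAt
  have heq : slidingAvg X p q =
      fun s => ((∫ u in (0:ℝ)..s + q, X u) - ∫ u in (0:ℝ)..s + p, X u) / (q - p) := by
    funext s
    rw [slidingAvg, intervalIntegral.integral_interval_sub_left (hX.intervalIntegrable _ _)
      (hX.intervalIntegrable _ _)]
  rw [heq]
  exact (((hG _).comp_add_const s q).sub ((hG _).comp_add_const s p)).div_const _

theorem contDiff_slidingAvg (hX : Continuous X) : ContDiff ℝ 1 (slidingAvg X p q) := by
  rw [contDiff_one_iff_deriv]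
  refine ⟨fun s => (hasDerivAt_slidingAvg hX p q s).differentiableAt, ?_⟩
  rw [funext fun s => (hasDerivAt_slidingAvg hX p q s).deriv]
  fun_prop

theorem integralMulDeriv_slidingAvg (hX : Continuous X) (Y : ℝ → ℝ) (t : ℝ) :
    integralMulDeriv Y (slidingAvg X p q) t =
      ∫ s in (0:ℝ)..t, Y s * ((X (s + q) - X (s + p)) / (q - p)) := by
  simp only [integralMulDeriv, fun s => (hasDerivAt_slidingAvg hX p q s).deriv]

variable (hX : Continuous X) (hH : ∀ s t, |X t - X s| ≤ N * |t - s| ^ α) (hpq : p < q)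
include hX hH hpq

theorem abs_slidingAvg_sub_slidingAvg_le (s t : ℝ) :
    |slidingAvg X p q t - slidingAvg X p q s| ≤ N * |t - s| ^ α := by
  have hrep : ∀ x, slidingAvg X p q x = (∫ u in p..q, X (x + u)) / (q - p) := fun x => by
    rw [slidingAvg, intervalIntegral.integral_comp_add_left]
  rw [hrep, hrep, ← sub_div, ← intervalIntegral.integral_sub
    (Continuous.intervalIntegrable (by fun_prop) _ _)
    (Continuous.intervalIntegrable (by fun_prop) _ _), abs_div, abs_of_pos (sub_pos.2 hpq),
    div_le_iff₀ (sub_pos.2 hpq)]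
  have := intervalIntegral.norm_integral_le_of_norm_le_const (a := p) (b := q)
    (C := N * |t - s| ^ α) (f := fun u => X (t + u) - X (s + u)) fun u _ => by
      simpa only [Real.norm_eq_abs, add_sub_add_right_eq_sub] using hH (s + u) (t + u)
  simpa [abs_of_pos (sub_pos.2 hpq)] using this

theorem abs_slidingAvg_sub_le (hN : 0 ≤ N) (hα : 0 ≤ α) (hp : -ε ≤ p) (hq : q ≤ ε) (s : ℝ) :
    |slidingAvg X p q s - X s| ≤ N * ε ^ α := by
  have hqp := sub_pos.2 hpq
  have heq : slidingAvg X p q s - X s = (∫ u in (s + p)..(s + q), (X u - X s)) / (q - p) := by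
    rw [intervalIntegral.integral_sub (hX.intervalIntegrable _ _) intervalIntegrable_const,
      intervalIntegral.integral_const, smul_eq_mul, add_sub_add_left_eq_sub, slidingAvg]
    field_simp
  rw [heq, abs_div, abs_of_pos hqp, div_le_iff₀ hqp]
  have := intervalIntegral.norm_integral_le_of_norm_le_const (a := s + p) (b := s + q)
    (C := N * ε ^ α) (f := fun u => X u - X s) fun u hu => by
      rw [uIoc_of_le (by linarith)] at hu
      refine (hH s u).trans (mul_le_mul_of_nonneg_left (Real.rpow_le_rpow (abs_nonneg _) ?_ hα) hN)
      exact abs_le.2 ⟨by linarith [hu.1], by linarith [hu.2]⟩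
  simpa [abs_of_pos hqp] using this

theorem holderC_slidingAvg_sub (hN : 0 ≤ N) (hε : 0 < ε) (hp : -ε ≤ p) (hq : q ≤ ε) {α₀ : ℝ}
    (hα₀ : 0 < α₀) (hα₀α : α₀ ≤ α) (T : ℝ) :
    HolderC T α₀ (2 * N * ε ^ (α - α₀)) (fun t => slidingAvg X p q t - X t) := by
  intro s _ t _
  have hmin : |(slidingAvg X p q t - X t) - (slidingAvg X p q s - X s)| ≤
      2 * N * min |t - s| ε ^ α := by
    rcases le_total |t - s| ε with h | h
    · rw [min_eq_left h, sub_sub_sub_comm]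
      linarith [abs_sub (slidingAvg X p q t - slidingAvg X p q s) (X t - X s),
        abs_slidingAvg_sub_slidingAvg_le hX hH hpq s t, hH s t]
    · have hα : 0 ≤ α := hα₀.le.trans hα₀α
      rw [min_eq_right h]
      linarith [abs_sub (slidingAvg X p q t - X t) (slidingAvg X p q s - X s),
        abs_slidingAvg_sub_le hX hH hpq hN hα hp hq t,
        abs_slidingAvg_sub_le hX hH hpq hN hα hp hq s]
  calc _ ≤ 2 * N * min |t - s| ε ^ α := hmin
    _ ≤ 2 * N * (ε ^ (α - α₀) * |t - s| ^ α₀) :=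
        mul_le_mul_of_nonneg_left (Real.rpow_min_le (abs_nonneg _) hε hα₀ hα₀α) (by positivity)
    _ = _ := by ring

end SlidingAvg

section Regularizations

variable {X : ℝ → ℝ} (hX : Continuous X) (ε : ℝ) (Y : ℝ → ℝ)
include hX

theorem Iminus_eq_integralMulDeriv : Iminus ε Y X = integralMulDeriv Y (slidingAvg X 0 ε) := by
  funext t
  simp [Iminus, integralMulDeriv_slidingAvg hX, mul_div_assoc]

theorem Iplus_eq_integralMulDeriv : Iplus ε Y X = integralMulDeriv Y (slidingAvg X (-ε) 0) := by
  funext t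
  simp [Iplus, integralMulDeriv_slidingAvg hX, mul_div_assoc, sub_eq_add_neg]

theorem Izero_eq_integralMulDeriv : Izero ε Y X = integralMulDeriv Y (slidingAvg X (-ε) ε) := by
  funext t
  simp [Izero, integralMulDeriv_slidingAvg hX, mul_div_assoc, sub_eq_add_neg, two_mul]

end Regularizations

theorem stmt11_general (T α β : ℝ) (hT : 0 < T) (hα : 0 < α) (hβ : 0 < β) (hαβ : 1 < α + β)
    (X Y : ℝ → ℝ) (hXc : Continuous X) (hYc : Continuous Y)
    (hXe : ExtConst T X)
    (NX NY : ℝ) (hX : HolderC T α NX X) (hY : HolderC T β NY Y) :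
    ∃ YI : ℝ → ℝ,
      -- the three regularized integrals converge uniformly to the same limit
      TendstoUniformlyOn (fun ε t => Iminus ε Y X t) YI
        (nhdsWithin 0 (Set.Ioi 0)) (Set.Icc 0 T) ∧
      TendstoUniformlyOn (fun ε t => Iplus ε Y X t) YI
        (nhdsWithin 0 (Set.Ioi 0)) (Set.Icc 0 T) ∧
      TendstoUniformlyOn (fun ε t => Izero ε Y X t) YI
        (nhdsWithin 0 (Set.Ioi 0)) (Set.Icc 0 T) ∧
      -- the common limit is the Young integral: it is approximated by classical
      -- integrals along any C¹ approximation of X in any Hölder norm C^{α'}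
      -- with α' + β > 1
      (∀ α' : ℝ, 0 < α' → α' ≤ α → 1 < α' + β →
        ∀ Xn : ℕ → ℝ → ℝ, (∀ n, ContDiff ℝ 1 (Xn n)) →
        (∀ t ∈ Set.Icc (0:ℝ) T, Tendsto (fun n => Xn n t) atTop (nhds (X t))) →
        (∃ N : ℕ → ℝ, Tendsto N atTop (nhds 0) ∧
          ∀ n, HolderC T α' (N n) (fun t => Xn n t - X t)) →
        TendstoUniformlyOn (fun n t => ∫ s in (0:ℝ)..t, Y s * deriv (Xn n) s) YI
          atTop (Set.Icc 0 T)) := by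
  obtain ⟨α₀, hα₀m, hα₀α⟩ := exists_between (max_lt (by linarith : 1 - β < α) hα)
  have hα₀ : 0 < α₀ := (le_max_right _ _).trans_lt hα₀m
  have hα₀β : 1 < α₀ + β := by linarith [(le_max_left _ _).trans_lt hα₀m]
  set M : ℝ → ℝ := fun ε => 2 * NX * ε ^ (α - α₀)
  have hM : Tendsto M (𝓝 0) (𝓝 0) := by
    simpa [M, Real.zero_rpow (by linarith : α - α₀ ≠ 0)] using
      (Real.continuousAt_rpow_const 0 (α - α₀) (Or.inr (by linarith))).tendsto.const_mul (2 * NX)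
  have happrox : ∀ {ε p q : ℝ}, 0 < ε → -ε ≤ p → p < q → q ≤ ε → ContDiff ℝ 1 (slidingAvg X p q) ∧
      HolderC T α₀ (M ε) (fun t => slidingAvg X p q t - X t) := fun hε hp hpq hq =>
    ⟨contDiff_slidingAvg hXc, holderC_slidingAvg_sub hXc (hX.abs_sub_le_of_extConst hT hα.le hXe)
      hpq (hX.nonneg hT) hε hp hq hα₀ hα₀α.le T⟩
  obtain ⟨YI, hYI⟩ := exists_youngIntegral hT hβ hα₀ hα₀β hYc hY
    (Z := fun n : ℕ => slidingAvg X 0 (1 / (n + 1))) (ZN := fun n : ℕ => M (1 / (n + 1)))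
    (fun n => happrox (by positivity) (neg_nonpos.2 (by positivity)) (by positivity) le_rfl)
    (hM.comp tendsto_one_div_add_atTop_nhds_zero_nat)
  have hreg : ∀ p q : ℝ → ℝ, (∀ ε > 0, -ε ≤ p ε ∧ p ε < q ε ∧ q ε ≤ ε) →
      TendstoUniformlyOn (fun ε => integralMulDeriv Y (slidingAvg X (p ε) (q ε))) YI
        (𝓝[>] 0) (Icc 0 T) := fun p q hpq =>
    hYI α₀ hα₀ hα₀β (hM.mono_left nhdsWithin_le_nhds) (eventually_nhdsWithin_of_forall
      fun ε hε => happrox hε (hpq ε hε).1 (hpq ε hε).2.1 (hpq ε hε).2.2)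
  refine ⟨YI, ?_, ?_, ?_, fun α' hα' _ hα'β Xn hXn _ ⟨N, hN, hXnN⟩ =>
    hYI α' hα' hα'β hN (.of_forall fun n => ⟨hXn n, hXnN n⟩)⟩
  · simpa only [Iminus_eq_integralMulDeriv hXc] using
      hreg (fun _ => 0) (fun ε => ε) fun ε hε => ⟨neg_nonpos.2 hε.le, hε, le_rfl⟩
  · simpa only [Iplus_eq_integralMulDeriv hXc] using
      hreg Neg.neg (fun _ => 0) fun ε hε => ⟨le_rfl, neg_lt_zero.2 hε, hε.le⟩
  · simpa only [Izero_eq_integralMulDeriv hXc] using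
      hreg Neg.neg (fun ε => ε) fun ε hε => ⟨le_rfl, neg_lt_self hε, le_rfl⟩

/-- for `X ∈ C^α`, `Y ∈ C^β` with `α + β > 1`, the forward, backward and
symmetric integrals exist (uniformly on `[0,T]`) and all coincide with the Young
integral, the latter being characterized as the limit of the classical integrals
`∫₀ᵗ Y Xₙ' ds` along any `C¹` approximation of `X` in Hölder norm. -/
theorem stmt11 (T α β : ℝ) (hT : 0 < T) (hα : 0 < α) (hβ : 0 < β) (hαβ : 1 < α + β)
    (X Y : ℝ → ℝ) (hXc : Continuous X) (hYc : Continuous Y)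
    (hXe : ExtConst T X) (hYe : ExtConst T Y)
    (NX NY : ℝ) (hX : HolderC T α NX X) (hY : HolderC T β NY Y) :
    ∃ YI : ℝ → ℝ,
      -- the three regularized integrals converge uniformly to the same limit
      TendstoUniformlyOn (fun ε t => Iminus ε Y X t) YI
        (nhdsWithin 0 (Set.Ioi 0)) (Set.Icc 0 T) ∧
      TendstoUniformlyOn (fun ε t => Iplus ε Y X t) YI
        (nhdsWithin 0 (Set.Ioi 0)) (Set.Icc 0 T) ∧
      TendstoUniformlyOn (fun ε t => Izero ε Y X t) YI
        (nhdsWithin 0 (Set.Ioi 0)) (Set.Icc 0 T) ∧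
      -- the common limit is the Young integral: it is approximated by classical
      -- integrals along any C¹ approximation of X in any Hölder norm C^{α'}
      -- with α' + β > 1
      (∀ α' : ℝ, 0 < α' → α' ≤ α → 1 < α' + β →
        ∀ Xn : ℕ → ℝ → ℝ, (∀ n, ContDiff ℝ 1 (Xn n)) →
        (∀ t ∈ Set.Icc (0:ℝ) T, Tendsto (fun n => Xn n t) atTop (nhds (X t))) →
        (∃ N : ℕ → ℝ, Tendsto N atTop (nhds 0) ∧
          ∀ n, HolderC T α' (N n) (fun t => Xn n t - X t)) →
        TendstoUniformlyOn (fun n t => ∫ s in (0:ℝ)..t, Y s * deriv (Xn n) s) YI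
          atTop (Set.Icc 0 T)) :=
  stmt11_general T α β hT hα hβ hαβ X Y hXc hYc hXe NX NY hX hY
end
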